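/- arXiv:1902.07018 — 5 statements merged into one kernel-verified Lean document; each statement's English description precedes it below -/
import Mathlib

section
/- For every positive integer r, the 2-colour list Ramsey number of the star equals the 2-colour Ramsey number: R_ℓ(K_{1,r}, 2) = R(K_{1,r}, 2), and this common value equals 2r - 1 if r is even and 2r if r is odd. -/
/-- The star `K_{1,r}` with centre `0` and `r` leaves. -/
def starGraph (r : ℕ) : SimpleGraph (Fin (r + 1)) :=
  SimpleGraph.fromRel (fun a _ => a = 0)

/-- A colouring `c` of the edges of the complete graph on `Fin n` contains a
monochromatic copy of the graph `G`. -/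
def HasMonoCopy {α β : Type*} (G : SimpleGraph α) {n : ℕ} (c : Sym2 (Fin n) → β) : Prop :=
  ∃ (f : α → Fin n) (x : β), Function.Injective f ∧
    ∀ a b, G.Adj a b → c s(f a, f b) = x

/-- The `k`-colour list Ramsey number of a graph `G`: the least `n` for which one can
assign a list of `k` colours to each edge of `K_n` so that every colouring of the edges
from these lists contains a monochromatic copy of `G`. -/
noncomputable def listRamsey {α : Type*} (G : SimpleGraph α) (k : ℕ) : ℕ :=
  sInf { n : ℕ | ∃ L : Sym2 (Fin n) → Finset ℕ,
    (∀ e : Sym2 (Fin n), ¬ e.IsDiag → (L e).card = k) ∧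
    ∀ c : Sym2 (Fin n) → ℕ, (∀ e : Sym2 (Fin n), ¬ e.IsDiag → c e ∈ L e) →
      HasMonoCopy G c }

/-- The ordinary `k`-colour Ramsey number of a graph `G`: the least `n` such that every
`k`-colouring of the edges of `K_n` contains a monochromatic copy of `G`. -/
noncomputable def ramsey {α : Type*} (G : SimpleGraph α) (k : ℕ) : ℕ :=
  sInf { n : ℕ | ∀ c : Sym2 (Fin n) → Fin k, HasMonoCopy G c }

/-!
Without a monochromatic `K_{1,r}`, every vertex of a two-coloured `K_n` has at most `r - 1`
edges of each colour, so `n ≤ 2r - 1`; for `n = 2r - 1` each colour class would be an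
`(r - 1)`-regular graph on an odd number of vertices, impossible when `r` is even. Ramsey arrows
are list-Ramsey arrows (use the lists `{0, …, k - 1}`), so it remains to colour any two-element
lists below this bound without a monochromatic `K_{1,r}`.

For that, walk along an Euler circuit of `K_{2r-1}` containing `K_n`: it visits every vertex
`r - 1` times. Colour its steps from the lists so that consecutive steps differ; then the two
edges at each visit differ, and each colour occurs at most `r - 1` times at every vertex. Such a
cyclic list colouring exists when the cycle is even (`r` odd) or two consecutive lists differ:
for `r` even we have `n ≤ 2r - 2`, and the steps through a vertex outside `K_n` get fresh lists.
-/

open Finset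

lemma starGraph_adj {r : ℕ} {a b : Fin (r + 1)} :
    (starGraph r).Adj a b ↔ a ≠ b ∧ (a = 0 ∨ b = 0) := by
  simp [starGraph, SimpleGraph.fromRel_adj]

section ColourNeighbours

variable {β : Type*} [DecidableEq β] {n : ℕ}

def colourNeighborFinset (c : Sym2 (Fin n) → β) (v : Fin n) (x : β) : Finset (Fin n) :=
  {u | u ≠ v ∧ c s(v, u) = x}

theorem hasMonoCopy_starGraph_iff {r : ℕ} {c : Sym2 (Fin n) → β} :
    HasMonoCopy (starGraph r) c ↔ ∃ v x, r ≤ #(colourNeighborFinset c v x) := by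
  constructor
  · rintro ⟨f, x, hf, hc⟩
    refine ⟨f 0, x, ?_⟩
    calc r = #(univ : Finset (Fin r)) := by simp
      _ ≤ _ := by
        refine card_le_card_of_injOn (fun i => f i.succ) (fun i _ => ?_)
          (fun i _ j _ h => Fin.succ_injective _ (hf h))
        simp only [colourNeighborFinset, coe_filter, mem_univ, true_and, Set.mem_ofPred_eq]
        exact ⟨fun h => Fin.succ_ne_zero i (hf h),
          hc 0 i.succ (starGraph_adj.2 ⟨(Fin.succ_ne_zero i).symm, .inl rfl⟩)⟩
  · rintro ⟨v, x, h⟩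
    have he (i : Fin r) : _ ≠ v ∧ c s(v, _) = x :=
      mem_filter.1 (orderEmbOfCardLe_mem (colourNeighborFinset c v x) h i) |>.2
    set e := (colourNeighborFinset c v x).orderEmbOfCardLe h
    refine ⟨Fin.cases v e, x, ?_, ?_⟩
    · intro a b hab
      cases a using Fin.cases <;> cases b using Fin.cases <;>
        simp only [Fin.cases_zero, Fin.cases_succ] at hab
      · rfl
      · exact absurd hab.symm (he _).1
      · exact absurd hab (he _).1
      · rw [e.injective hab]
    · intro a b hab
      obtain ⟨hne, rfl | rfl⟩ := starGraph_adj.1 hab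
      · cases b using Fin.cases
        · exact absurd rfl hne
        · simpa using (he _).2
      · cases a using Fin.cases
        · exact absurd rfl hne
        · simpa [Sym2.eq_swap] using (he _).2

end ColourNeighbours

section TwoColours

variable {β : Type*} [DecidableEq β] {n : ℕ} {c : Sym2 (Fin n) → β} {x y : β}

lemma sub_one_le_card_colourNeighborFinset_add
    (hc : ∀ e : Sym2 (Fin n), ¬ e.IsDiag → c e = x ∨ c e = y) (v : Fin n) :
    n - 1 ≤ #(colourNeighborFinset c v x) + #(colourNeighborFinset c v y) := by
  calc n - 1 = #(univ.erase v) := by simp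
    _ ≤ #(colourNeighborFinset c v x ∪ colourNeighborFinset c v y) := by
        refine card_le_card fun u hu => ?_
        have huv : u ≠ v := ne_of_mem_erase hu
        have hxy := hc s(v, u) (by simpa using huv.symm)
        simpa [colourNeighborFinset, huv] using hxy
    _ ≤ _ := card_union_le _ _

theorem hasMonoCopy_starGraph_of_two_colours {r : ℕ} (hr : 0 < r)
    (hn : (if Even r then 2 * r - 1 else 2 * r) ≤ n)
    (hc : ∀ e : Sym2 (Fin n), ¬ e.IsDiag → c e = x ∨ c e = y) :
    HasMonoCopy (starGraph r) c := by
  classical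
  by_contra hno
  have h v z : #(colourNeighborFinset c v z) < r :=
    not_le.1 fun h => hno (hasMonoCopy_starGraph_iff.2 ⟨v, z, h⟩)
  have hsplit v := sub_one_le_card_colourNeighborFinset_add hc v
  have hn' : n ≤ 2 * r - 1 := by
    rcases n.eq_zero_or_pos with rfl | hpos
    · omega
    · have := hsplit ⟨0, hpos⟩
      have := h ⟨0, hpos⟩ x
      have := h ⟨0, hpos⟩ y
      omega
  split_ifs at hn with hr2
  swap
  · omega
  let G : SimpleGraph (Fin n) := SimpleGraph.fromRel fun u w => c s(u, w) = x
  have hdeg v : G.degree v = r - 1 := by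
    have hG : G.neighborFinset v = colourNeighborFinset c v x := by
      ext u
      simp [G, colourNeighborFinset, Sym2.eq_swap (a := u), eq_comm (a := u)]
    have := hsplit v
    have := h v x
    have := h v y
    rw [← G.card_neighborFinset_eq_degree, hG]
    omega
  have hodd := G.even_card_odd_degree_vertices
  have hodd_r : Odd (r - 1) := by rcases hr2 with ⟨s, hs⟩; exact ⟨s - 1, by omega⟩
  simp only [hdeg, hodd_r, filter_true, card_univ, Fintype.card_fin] at hodd
  rcases hodd with ⟨s, hs⟩
  omega

end TwoColours

-- `n → (G)_k`: the predicates whose least solutions are `ramsey G k` and `listRamsey G k`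
def RamseyArrows {α : Type*} (G : SimpleGraph α) (k n : ℕ) : Prop :=
  ∀ c : Sym2 (Fin n) → Fin k, HasMonoCopy G c

def ListRamseyArrows {α : Type*} (G : SimpleGraph α) (k n : ℕ) : Prop :=
  ∃ L : Sym2 (Fin n) → Finset ℕ, (∀ e, ¬ e.IsDiag → #(L e) = k) ∧
    ∀ c : Sym2 (Fin n) → ℕ, (∀ e, ¬ e.IsDiag → c e ∈ L e) → HasMonoCopy G c

lemma RamseyArrows.listRamseyArrows {α : Type*} {G : SimpleGraph α} {k n : ℕ} (hk : 0 < k)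
    (h : RamseyArrows G k n) : ListRamseyArrows G k n := by
  refine ⟨fun _ => range k, fun _ _ => card_range k, fun c hc => ?_⟩
  obtain ⟨f, x, hf, hx⟩ := h fun e => ⟨c e % k, Nat.mod_lt _ hk⟩
  refine ⟨f, x, hf, fun a b hab => ?_⟩
  have hlt : c s(f a, f b) < k :=
    mem_range.1 (hc _ (by simpa using hf.ne (G.ne_of_adj hab)))
  simpa [Fin.ext_iff, Nat.mod_eq_of_lt hlt] using hx a b hab

lemma ZMod.val_add_one_of_add_one_ne_zero {T : ℕ} [NeZero T] {u : ZMod T} (hu : u + 1 ≠ 0) :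
    (u + 1).val = u.val + 1 := by
  have hcast : u + 1 = ((u.val + 1 : ℕ) : ZMod T) := by push_cast [ZMod.natCast_zmod_val]; rfl
  rw [hcast, ZMod.val_natCast, Nat.mod_eq_of_lt]
  refine lt_of_le_of_ne (ZMod.val_lt u) fun hT => hu ?_
  rw [hcast, hT, ZMod.natCast_self]

section CyclicListColouring

variable {α : Type*}

lemma exists_path_listColouring (p : ℕ → Finset α) (hp : ∀ i, 1 < #(p i)) (a : α) :
    ∃ f : ℕ → α, f 0 = a ∧ ∀ i, f (i + 1) ∈ p (i + 1) ∧ f (i + 1) ≠ f i := by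
  choose next hnext using fun i (b : α) => exists_mem_ne (hp (i + 1)) b
  exact ⟨fun i => Nat.rec a next i, rfl, fun i => hnext i _⟩

variable {T : ℕ} [NeZero T] {ℓ : ZMod T → Finset α}

lemma exists_cyclic_listColouring_of_not_subset (hℓ : ∀ t, 1 < #(ℓ t)) {t₀ : ZMod T}
    (ht₀ : ¬ ℓ (t₀ + 1) ⊆ ℓ t₀) : ∃ g : ZMod T → α, ∀ t, g t ∈ ℓ t ∧ g t ≠ g (t + 1) := by
  -- colour greedily along the path that starts right after the break at `t₀`
  obtain ⟨a, ha, ha'⟩ := not_subset.1 ht₀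
  obtain ⟨f, hf0, hf⟩ := exists_path_listColouring (fun i => ℓ (t₀ + 1 + i)) (fun _ => hℓ _) a
  have hmem (i : ℕ) : f i ∈ ℓ (t₀ + 1 + i) := by
    cases i with
    | zero => simpa [hf0] using ha
    | succ i => exact (hf i).1
  refine ⟨fun t => f (t - (t₀ + 1)).val, fun t => ⟨?_, ?_⟩⟩
  · simpa [ZMod.natCast_zmod_val] using hmem (t - (t₀ + 1)).val
  · by_cases ht : t = t₀
    · subst ht
      simp only [sub_self, ZMod.val_zero, hf0]
      rintro rfl
      exact ha' (by simpa [ZMod.natCast_zmod_val] using hmem (t - (t + 1)).val)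
    · have hval : (t + 1 - (t₀ + 1)).val = (t - (t₀ + 1)).val + 1 := by
        rw [← ZMod.val_add_one_of_add_one_ne_zero (by
          rw [sub_add_eq_add_sub, add_sub_add_right_eq_sub]; exact sub_ne_zero.2 ht)]
        ring_nf
      simp only [hval]
      exact (hf _).2.symm

lemma exists_cyclic_listColouring_of_even (hℓ : ∀ t, 1 < #(ℓ t)) (hT : Even T)
    (hsub : ∀ t, ℓ (t + 1) ⊆ ℓ t) : ∃ g : ZMod T → α, ∀ t, g t ∈ ℓ t ∧ g t ≠ g (t + 1) := by
  -- going backwards around the cycle the lists grow, so all contain `ℓ 0`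
  have hsub₀ (t : ZMod T) : ℓ 0 ⊆ ℓ t := by
    have key (i : ℕ) : ℓ 0 ⊆ ℓ (-i) := by
      induction i with
      | zero => simp
      | succ i ih => exact ih.trans (by simpa [sub_eq_neg_add] using hsub (-(i : ZMod T) - 1))
    simpa [ZMod.natCast_zmod_val] using key (-t).val
  obtain ⟨a, ha, b, hb, hab⟩ := one_lt_card.1 (hℓ 0)
  let φ := ZMod.castHom (even_iff_two_dvd.1 hT) (ZMod 2)
  refine ⟨fun t => if φ t = 0 then a else b, fun t => ⟨?_, ?_⟩⟩
  · dsimp only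
    split_ifs
    exacts [hsub₀ t ha, hsub₀ t hb]
  · have hφ : φ (t + 1) = φ t + 1 := by simp
    dsimp only
    rw [hφ]
    have hz : ∀ z : ZMod 2, (z = 0 ∧ z + 1 ≠ 0) ∨ (z ≠ 0 ∧ z + 1 = 0) := by decide
    rcases hz (φ t) with ⟨h1, h2⟩ | ⟨h1, h2⟩ <;> simp [h1, h2, hab, hab.symm]

theorem exists_cyclic_listColouring (hℓ : ∀ t, 1 < #(ℓ t))
    (h : Even T ∨ ∃ t, ¬ ℓ (t + 1) ⊆ ℓ t) :
    ∃ g : ZMod T → α, ∀ t, g t ∈ ℓ t ∧ g t ≠ g (t + 1) := by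
  by_cases hbreak : ∃ t, ¬ ℓ (t + 1) ⊆ ℓ t
  · obtain ⟨t₀, ht₀⟩ := hbreak
    exact exists_cyclic_listColouring_of_not_subset hℓ ht₀
  · push Not at hbreak
    exact exists_cyclic_listColouring_of_even hℓ (h.resolve_right (by simpa using hbreak)) hbreak

end CyclicListColouring

section WalkColouring

variable {T m : ℕ} [NeZero T] {β : Type*} [DecidableEq β]

theorem card_colourNeighborFinset_le_of_walk (w : ZMod T → ℕ) (τ : Sym2 (Fin m) → ZMod T)
    (hτ : ∀ e, ¬ e.IsDiag → e.map Fin.val = s(w (τ e), w (τ e + 1)))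
    (g : ZMod T → β) (hg : ∀ t, g t ≠ g (t + 1)) (v : Fin m) (x : β) :
    #(colourNeighborFinset (g ∘ τ) v x) ≤ #{t | w t = v} := by
  -- send the edge `vu` to the visit of `v` at one end of the step `τ s(v, u)` of the walk;
  -- edges sent to the same visit are consecutive steps, which `g` colours differently
  have hends {u} (hu : u ≠ v) : (w (τ s(v, u)) = v ∧ w (τ s(v, u) + 1) = u) ∨
      (w (τ s(v, u) + 1) = v ∧ w (τ s(v, u)) = u) := by
    have := hτ s(v, u) (by simpa using hu.symm)
    simp only [Sym2.map_mk, Sym2.eq_iff] at this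
    omega
  have hτ_inj {u₁ u₂} (hu₁ : u₁ ≠ v) (hu₂ : u₂ ≠ v) (h : τ s(v, u₁) = τ s(v, u₂)) : u₁ = u₂ := by
    rcases hends hu₁ with h₁ | h₁ <;> rcases hends hu₂ with h₂ | h₂ <;>
      rw [h] at h₁ <;> exact Fin.ext (by omega)
  let visit (u : Fin m) : ZMod T := if w (τ s(v, u)) = v then τ s(v, u) else τ s(v, u) + 1
  refine card_le_card_of_injOn visit (fun u hu => ?_) (fun u₁ hu₁ u₂ hu₂ h => ?_)
  · simp only [colourNeighborFinset, coe_filter, mem_univ, true_and, Set.mem_ofPred_eq] at hu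
    simp only [coe_filter, mem_univ, true_and, Set.mem_ofPred_eq, visit]
    split_ifs with h
    · exact h
    · exact ((hends hu.1).resolve_left fun h' => h h'.1).1
  · simp only [colourNeighborFinset, coe_filter, mem_univ, true_and, Set.mem_ofPred_eq,
      Function.comp_apply] at hu₁ hu₂
    simp only [visit] at h
    split_ifs at h
    · exact hτ_inj hu₁.1 hu₂.1 h
    · exact absurd (hu₁.2.trans hu₂.2.symm) (h ▸ (hg _).symm)
    · exact absurd (hu₂.2.trans hu₁.2.symm) (h ▸ (hg _).symm)
    · exact hτ_inj hu₁.1 hu₂.1 (add_right_cancel h)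

end WalkColouring

section WalkListColouring

variable {T m : ℕ}

lemma Sym2.exists_eq_mk_of_map_val_eq {e : Sym2 (Fin m)} {a b : ℕ}
    (h : e.map Fin.val = s(a, b)) : ∃ (ha : a < m) (hb : b < m), e = s(⟨a, ha⟩, ⟨b, hb⟩) := by
  induction e using Sym2.ind with
  | h i j =>
    rcases Sym2.eq_iff.1 (by simpa using h) with ⟨rfl, rfl⟩ | ⟨rfl, rfl⟩
    exacts [⟨i.2, j.2, rfl⟩, ⟨j.2, i.2, Sym2.eq_swap⟩]

-- Steps off `K_m` get fresh lists (colours `≥ M`), distinct for distinct steps: they break the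
-- cycle of lists.
def walkLists (w : ZMod T → ℕ) (L : Sym2 (Fin m) → Finset ℕ) (M : ℕ) (t : ZMod T) : Finset ℕ :=
  if h : w t < m ∧ w (t + 1) < m ∧ w t ≠ w (t + 1) then L s(⟨w t, h.1⟩, ⟨w (t + 1), h.2.1⟩)
  else {M + 2 * t.val, M + 2 * t.val + 1}

variable {w : ZMod T → ℕ} {L : Sym2 (Fin m) → Finset ℕ} {M : ℕ}

lemma walkLists_eq {t : ZMod T} {e : Sym2 (Fin m)} (he : ¬ e.IsDiag)
    (hte : e.map Fin.val = s(w t, w (t + 1))) : walkLists w L M t = L e := by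
  obtain ⟨ha, hb, hab⟩ := Sym2.exists_eq_mk_of_map_val_eq hte
  have hreal : w t < m ∧ w (t + 1) < m ∧ w t ≠ w (t + 1) :=
    ⟨ha, hb, fun h => he (by rw [hab, Sym2.mk_isDiag_iff, Fin.ext_iff]; exact h)⟩
  rw [walkLists, dif_pos hreal, ← hab]

lemma one_lt_card_walkLists (hL : ∀ e, ¬ e.IsDiag → 1 < #(L e)) (t : ZMod T) :
    1 < #(walkLists w L M t) := by
  unfold walkLists
  split_ifs with h
  · exact hL _ (by simpa [Fin.ext_iff] using h.2.2)
  · rw [card_pair (by omega)]; omega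

lemma not_walkLists_add_one_subset [NeZero T] (hT : 1 < T) (hL : ∀ e, ¬ e.IsDiag → 1 < #(L e))
    (hM : ∀ e, L e ⊆ range M) {t : ZMod T}
    (ht : m ≤ w t) : ¬ walkLists w L M (t + 1) ⊆ walkLists w L M t := by
  have hval : (t + 1).val ≠ t.val := fun h => by
    have : Fact (1 < T) := ⟨hT⟩
    simpa using ZMod.val_injective T h
  have ht' : walkLists w L M t = {M + 2 * t.val, M + 2 * t.val + 1} := by
    rw [walkLists, dif_neg (by omega)]
  intro hsub
  obtain ⟨a, ha⟩ := card_pos.1 ((one_lt_card_walkLists (w := w) (M := M) hL (t + 1)).trans'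
    zero_lt_one)
  have hat := ht' ▸ hsub ha
  simp only [mem_insert, mem_singleton] at hat
  unfold walkLists at ha
  split_ifs at ha
  · have := mem_range.1 (hM _ ha)
    omega
  · simp only [mem_insert, mem_singleton] at ha
    omega

end WalkListColouring

theorem exists_listColouring_of_walk {T m k : ℕ} [NeZero T] (hT : 1 < T) (w : ZMod T → ℕ)
    (hcover : ∀ e : Sym2 (Fin m), ¬ e.IsDiag → ∃ t, e.map Fin.val = s(w t, w (t + 1)))
    (hvisit : ∀ v, #{t | w t = v} ≤ k) (hbreak : Even T ∨ ∃ t, m ≤ w t)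
    (L : Sym2 (Fin m) → Finset ℕ) (hL : ∀ e, ¬ e.IsDiag → 1 < #(L e)) :
    ∃ c : Sym2 (Fin m) → ℕ, (∀ e, ¬ e.IsDiag → c e ∈ L e) ∧
      ∀ v x, #(colourNeighborFinset c v x) ≤ k := by
  classical
  obtain ⟨M, hM⟩ := exists_nat_subset_range (univ.biUnion L)
  obtain ⟨g, hg⟩ := exists_cyclic_listColouring (ℓ := walkLists w L M) (one_lt_card_walkLists hL)
    (hbreak.imp_right fun ⟨t, ht⟩ => ⟨t, not_walkLists_add_one_subset hT hL
      (fun e => (subset_biUnion_of_mem L (mem_univ e)).trans hM) ht⟩)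
  have hcover' (e : Sym2 (Fin m)) : ∃ t, ¬ e.IsDiag → e.map Fin.val = s(w t, w (t + 1)) :=
    if he : e.IsDiag then ⟨0, absurd he⟩ else (hcover e he).imp fun _ h _ => h
  choose τ hτ using hcover'
  refine ⟨g ∘ τ, fun e he => (walkLists_eq (L := L) (M := M) he (hτ e he)) ▸ (hg (τ e)).1,
    fun v x => ?_⟩
  exact (card_colourNeighborFinset_le_of_walk w τ hτ g (fun t => (hg t).2) v x).trans (hvisit v)

-- Read cyclically, `eulerTour k` is an Euler circuit of `K_{2k+1}`: `eulerBlock k` is the closed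
-- trail `0, a, 1, b, 2, a, …, 2k-1, b, 2k, a, b` through all edges at `a = 2k+1`, `b = 2k+2`.
def zigzag (a b j : ℕ) : List ℕ := (List.range j).flatMap fun i => [2 * i, a, 2 * i + 1, b]

def eulerBlock (k : ℕ) : List ℕ :=
  zigzag (2 * k + 1) (2 * k + 2) k ++ [2 * k, 2 * k + 1, 2 * k + 2]

def eulerTour (k : ℕ) : List ℕ := (List.range k).flatMap eulerBlock

lemma zigzag_succ (a b j : ℕ) : zigzag a b (j + 1) = zigzag a b j ++ [2 * j, a, 2 * j + 1, b] := by
  simp [zigzag, List.range_succ]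

lemma eulerTour_succ (k : ℕ) : eulerTour (k + 1) = eulerTour k ++ eulerBlock k := by
  simp [eulerTour, List.range_succ]

lemma length_zigzag (a b j : ℕ) : (zigzag a b j).length = 4 * j := by
  induction j with
  | zero => rfl
  | succ j ih => simp [zigzag_succ, ih]; ring

lemma length_eulerTour (k : ℕ) : (eulerTour k).length = k * (2 * k + 1) := by
  induction k with
  | zero => rfl
  | succ k ih => simp [eulerTour_succ, eulerBlock, length_zigzag, ih]; ring

lemma count_zigzag {a b j : ℕ} (ha : 2 * j ≤ a) (hb : 2 * j ≤ b) (hab : a ≠ b) (v : ℕ) :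
    (zigzag a b j).count v =
      (if v = a ∨ v = b then j else 0) + if v < 2 * j then 1 else 0 := by
  induction j with
  | zero => simp [zigzag]
  | succ j ih =>
    rw [zigzag_succ, List.count_append, ih (by omega) (by omega)]
    simp only [List.count_cons, List.count_nil, beq_iff_eq]
    split_ifs <;> omega

lemma count_eulerTour (k v : ℕ) : (eulerTour k).count v = if v < 2 * k + 1 then k else 0 := by
  induction k with
  | zero => simp [eulerTour]
  | succ k ih =>
    rw [eulerTour_succ, List.count_append, ih, eulerBlock, List.count_append,
      count_zigzag (by omega) (by omega) (by omega)]
    simp only [List.count_cons, List.count_nil, beq_iff_eq]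
    split_ifs <;> omega

lemma eulerBlock_eq_cons (k : ℕ) : ∃ l, eulerBlock k = 0 :: l := by
  cases k with
  | zero => exact ⟨_, rfl⟩
  | succ k => exact ⟨_, by simp [eulerBlock, zigzag, List.range_succ_eq_map]; rfl⟩

lemma getD_eulerTour_zero (k : ℕ) : (eulerTour k).getD 0 0 = 0 := by
  cases k with
  | zero => rfl
  | succ k => simp [eulerTour, List.range_succ_eq_map, eulerBlock, zigzag]

def AdjacentIn (l : List ℕ) (a b : ℕ) : Prop := [a, b] <:+: l ∨ [b, a] <:+: l

lemma AdjacentIn.mono {l₁ l₂ : List ℕ} {a b : ℕ} (h : l₁ <:+: l₂) (hab : AdjacentIn l₁ a b) :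
    AdjacentIn l₂ a b :=
  hab.imp (·.trans h) (·.trans h)

lemma infix_zigzag {a b i j : ℕ} (hij : i < j) :
    [2 * i, a, 2 * i + 1, b, 2 * i + 2] <:+: zigzag a b j ++ [2 * j] := by
  induction j with
  | zero => omega
  | succ j ih =>
    have hsplit : zigzag a b (j + 1) ++ [2 * (j + 1)] =
        zigzag a b j ++ [2 * j] ++ [a, 2 * j + 1, b, 2 * j + 2] := by
      simp [zigzag_succ, Nat.mul_succ]
    rw [hsplit]
    rcases Nat.lt_succ_iff_lt_or_eq.1 hij with hij | rfl
    · exact (ih hij).trans (List.prefix_append _ _).isInfix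
    · exact ⟨zigzag a b i, [], by simp⟩

lemma adjacentIn_eulerBlock {k a b : ℕ} (hab : a < b) (hb : 2 * k + 1 ≤ b) (hb' : b ≤ 2 * k + 2) :
    AdjacentIn (eulerBlock k ++ [0]) a b := by
  have hzig {i} (hi : i < k) :
      [2 * i, 2 * k + 1, 2 * i + 1, 2 * k + 2, 2 * i + 2] <:+: eulerBlock k ++ [0] :=
    (infix_zigzag hi).trans (List.IsPrefix.isInfix ⟨[2 * k + 1, 2 * k + 2, 0], by simp [eulerBlock]⟩)
  have hend : [2 * k, 2 * k + 1, 2 * k + 2, 0] <:+: eulerBlock k ++ [0] :=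
    List.IsSuffix.isInfix ⟨zigzag (2 * k + 1) (2 * k + 2) k, by simp [eulerBlock]⟩
  obtain ⟨i, rfl | rfl⟩ := a.even_or_odd'
  · obtain rfl | rfl := (by omega : b = 2 * k + 1 ∨ b = 2 * k + 2)
    · rcases (by omega : i < k ∨ i = k) with hi | rfl
      · exact .inl (List.IsInfix.trans ⟨[], [2 * i + 1, 2 * k + 2, 2 * i + 2], rfl⟩ (hzig hi))
      · exact .inl (List.IsInfix.trans ⟨[], [2 * i + 2, 0], rfl⟩ hend)
    · rcases i with _ | i
      · exact .inr (List.IsInfix.trans ⟨[2 * k, 2 * k + 1], [], rfl⟩ hend)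
      · exact .inr (List.IsInfix.trans ⟨[2 * i, 2 * k + 1, 2 * i + 1], [], rfl⟩ (hzig (by omega)))
  · obtain rfl | rfl := (by omega : b = 2 * k + 1 ∨ b = 2 * k + 2)
    · exact .inr (List.IsInfix.trans ⟨[2 * i], [2 * k + 2, 2 * i + 2], rfl⟩ (hzig (by omega)))
    · rcases (by omega : i < k ∨ i = k) with hi | rfl
      · exact .inl (List.IsInfix.trans ⟨[2 * i, 2 * k + 1], [2 * i + 2], rfl⟩ (hzig hi))
      · exact .inl (List.IsInfix.trans ⟨[2 * i], [0], rfl⟩ hend)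

lemma adjacentIn_eulerTour {k a b : ℕ} (hab : a < b) (hb : b < 2 * k + 1) :
    AdjacentIn (eulerTour k ++ [0]) a b := by
  induction k with
  | zero => omega
  | succ k ih =>
    obtain ⟨l, hl⟩ := eulerBlock_eq_cons k
    rw [eulerTour_succ, List.append_assoc]
    rcases lt_or_ge b (2 * k + 1) with hb' | hb'
    · refine (ih hb').mono ⟨[], l ++ [0], ?_⟩
      simp [hl]
    · exact (adjacentIn_eulerBlock hab hb' (by omega)).mono (List.suffix_append _ _).isInfix

section ListWalk

variable {W : List ℕ}

lemma card_filter_range_getD_eq_count (W : List ℕ) (v : ℕ) :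
    #{i ∈ range W.length | W.getD i 0 = v} = W.count v := by
  induction W with
  | nil => simp
  | cons x W ih =>
    rw [card_filter, List.length_cons, sum_range_succ', List.count_cons, ← ih, card_filter]
    simp only [List.getD_cons_succ, List.getD_cons_zero, beq_iff_eq]

lemma card_filter_getD_val_le_count [NeZero W.length] (v : ℕ) :
    #{t : ZMod W.length | W.getD t.val 0 = v} ≤ W.count v := by
  rw [← card_filter_range_getD_eq_count]
  refine card_le_card_of_injOn ZMod.val (fun t ht => ?_) (ZMod.val_injective _).injOn
  simp only [coe_filter, mem_univ, true_and, Set.mem_ofPred_eq] at ht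
  simpa using ⟨ZMod.val_lt t, ht⟩

lemma exists_getD_val_of_infix [NeZero W.length] (h0 : W.getD 0 0 = 0) {a b : ℕ}
    (h : [a, b] <:+: W ++ [0]) :
    ∃ t : ZMod W.length, W.getD t.val 0 = a ∧ W.getD (t + 1).val 0 = b := by
  have hget (j : ℕ) : (W ++ [0]).getD j 0 = W.getD j 0 := by
    rcases lt_or_ge j W.length with hj | hj
    · exact List.getD_append _ _ _ _ hj
    · rw [List.getD_append_right _ _ _ _ hj, List.getD_eq_default _ _ hj]
      simp
  obtain ⟨s, u, hsu⟩ := h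
  have hlen := congrArg List.length hsu
  simp only [List.length_append, List.length_cons, List.length_nil] at hlen
  have ha : W.getD s.length 0 = a := by
    rw [← hget, ← hsu, List.append_assoc, List.getD_append_right _ _ _ _ le_rfl]; simp
  have hb : W.getD (s.length + 1) 0 = b := by
    rw [← hget, ← hsu, List.append_assoc, List.getD_append_right _ _ _ _ (by omega)]; simp
  have hcast : (s.length : ZMod W.length) + 1 = ((s.length + 1 : ℕ) : ZMod W.length) := by
    push_cast; rfl
  refine ⟨s.length, ?_, ?_⟩
  · rwa [ZMod.val_natCast, Nat.mod_eq_of_lt (by omega)]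
  · rcases lt_or_ge (s.length + 1) W.length with hs | hs
    · rwa [hcast, ZMod.val_natCast, Nat.mod_eq_of_lt hs]
    · rw [hcast, (by omega : s.length + 1 = W.length), ZMod.natCast_self,
        ZMod.val_zero, h0, ← hb, List.getD_eq_default _ _ hs]

end ListWalk

theorem exists_eulerWalk (k : ℕ) [NeZero (eulerTour k).length] :
    ∃ w : ZMod (eulerTour k).length → ℕ,
      (∀ a b, a ≠ b → a < 2 * k + 1 → b < 2 * k + 1 → ∃ t, s(a, b) = s(w t, w (t + 1))) ∧
      ∀ v, #{t | w t = v} ≤ k := by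
  refine ⟨fun t => (eulerTour k).getD t.val 0, fun a b hab ha hb => ?_, fun v => ?_⟩
  · wlog hlt : a < b generalizing a b
    · rw [Sym2.eq_swap]; exact this b a hab.symm hb ha (by omega)
    rcases adjacentIn_eulerTour hlt hb with h | h <;>
      obtain ⟨t, ht, ht'⟩ := exists_getD_val_of_infix (getD_eulerTour_zero k) h
    · exact ⟨t, by dsimp only; rw [ht, ht']⟩
    · exact ⟨t, by dsimp only; rw [ht, ht', Sym2.eq_swap]⟩
  · refine (card_filter_getD_val_le_count v).trans ?_
    rw [count_eulerTour]
    split_ifs <;> omega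

theorem exists_listColouring_card_colourNeighborFinset_le {k m : ℕ} (hm : m ≤ 2 * k + 1)
    (hpar : Even k ∨ m ≤ 2 * k) (L : Sym2 (Fin m) → Finset ℕ)
    (hL : ∀ e, ¬ e.IsDiag → 1 < #(L e)) :
    ∃ c : Sym2 (Fin m) → ℕ, (∀ e, ¬ e.IsDiag → c e ∈ L e) ∧
      ∀ v x, #(colourNeighborFinset c v x) ≤ k := by
  rcases k.eq_zero_or_pos with rfl | hk
  · have hsub (i j : Fin m) : i = j := Fin.ext (by omega)
    refine ⟨fun _ => 0, fun e he => absurd ?_ he, fun v x => ?_⟩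
    · induction e using Sym2.ind with | h i j => simpa using hsub i j
    · simp [colourNeighborFinset, hsub _ v]
  have hT : 1 < (eulerTour k).length := by rw [length_eulerTour]; nlinarith
  have : NeZero (eulerTour k).length := ⟨by omega⟩
  obtain ⟨w, hcover, hvisit⟩ := exists_eulerWalk k
  refine exists_listColouring_of_walk hT w (fun e he => ?_) hvisit ?_ L hL
  · induction e using Sym2.ind with
    | h i j => exact hcover i j (by simpa [Fin.ext_iff] using he) (by omega) (by omega)
  · refine hpar.imp (fun hk => ?_) fun hm => ?_
    · rw [length_eulerTour]; exact hk.mul_right _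
    · obtain ⟨t, ht⟩ := hcover 0 (2 * k) (by omega) (by omega) (by omega)
      rcases Sym2.eq_iff.1 ht with ⟨-, h⟩ | ⟨-, h⟩
      exacts [⟨t + 1, h ▸ hm⟩, ⟨t, h ▸ hm⟩]

theorem ramseyArrows_starGraph {r : ℕ} (hr : 0 < r) :
    RamseyArrows (starGraph r) 2 (if Even r then 2 * r - 1 else 2 * r) := fun c =>
  hasMonoCopy_starGraph_of_two_colours hr le_rfl (x := 0) (y := 1) fun e _ => by
    have : ∀ z : Fin 2, z = 0 ∨ z = 1 := by decide
    exact this (c e)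

theorem not_listRamseyArrows_starGraph {r n : ℕ} (hr : 0 < r)
    (hn : n < if Even r then 2 * r - 1 else 2 * r) : ¬ ListRamseyArrows (starGraph r) 2 n := by
  rintro ⟨L, hL, hmono⟩
  have hpar : Even (r - 1) ∨ n ≤ 2 * (r - 1) := by
    by_cases hr2 : Even r
    · simp only [hr2, if_true] at hn; omega
    · obtain ⟨s, hs⟩ := Nat.not_even_iff_odd.1 hr2
      exact .inl ⟨s, by omega⟩
  obtain ⟨c, hcL, hc⟩ := exists_listColouring_card_colourNeighborFinset_le (k := r - 1)
    (by split_ifs at hn <;> omega) hpar L (fun e he => by rw [hL e he]; omega)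
  obtain ⟨v, x, hvx⟩ := hasMonoCopy_starGraph_iff.1 (hmono c hcL)
  have := hc v x
  omega

theorem list_ramsey_star_two_colours (r : ℕ) (hr : 0 < r) :
    listRamsey (starGraph r) 2 = ramsey (starGraph r) 2 ∧
    listRamsey (starGraph r) 2 = (if Even r then 2 * r - 1 else 2 * r) := by
  have hlist : listRamsey (starGraph r) 2 = if Even r then 2 * r - 1 else 2 * r :=
    IsLeast.csInf_eq ⟨(ramseyArrows_starGraph hr).listRamseyArrows two_pos,
      fun _ hn => not_lt.1 fun hlt => not_listRamseyArrows_starGraph hr hlt hn⟩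
  have hramsey : ramsey (starGraph r) 2 = if Even r then 2 * r - 1 else 2 * r :=
    IsLeast.csInf_eq ⟨ramseyArrows_starGraph hr,
      fun _ hn => not_lt.1 fun hlt => not_listRamseyArrows_starGraph hr hlt
        (RamseyArrows.listRamseyArrows two_pos hn)⟩
  exact ⟨hlist.trans hramsey.symm, hlist⟩
end

section
/- Let n, t, k, r be positive integers and suppose graphs G_1, …, G_t partition the edge set of the complete graph K_n. If χ'_ℓ(G_i) ≤ k for every i, and every vertex of K_n is incident to edges of at most r-1 of the graphs G_i, then R_ℓ(K_{1,r}, k) > n. -/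
/-- `G` is edge-choosable from lists of size `k`, i.e. its list chromatic index is at
most `k`: for every assignment of a `k`-element list of colours to each edge of `G`
there is a proper edge colouring choosing each edge's colour from its list. -/
def EdgeListColorable {α : Type*} (G : SimpleGraph α) (k : ℕ) : Prop :=
  ∀ L : Sym2 α → Finset ℕ, (∀ e ∈ G.edgeSet, (L e).card = k) →
    ∃ c : Sym2 α → ℕ, (∀ e ∈ G.edgeSet, c e ∈ L e) ∧
      ∀ a b b', G.Adj a b → G.Adj a b' → b ≠ b' → c s(a, b) ≠ c s(a, b')

lemma star_forced (k r : ℕ) (hr : 0 < r)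
    (c : Sym2 (Fin (k * (r - 1) + 2)) → ℕ)
    (hc : ∀ e, ¬ e.IsDiag → c e ∈ Finset.range k) :
    HasMonoCopy (starGraph r) c := by
  classical
  let v0 : Fin (k * (r - 1) + 2) := ⟨0, by omega⟩
  let s : Finset (Fin (k * (r - 1) + 2)) := Finset.univ.erase v0
  have hscard : s.card = k * (r - 1) + 1 := by
    simp [s, Finset.card_erase_of_mem, Finset.card_univ]
  have hmaps : ∀ w ∈ s, c s(v0, w) ∈ Finset.range k := by
    intro w hw
    refine hc _ ?_
    rw [Sym2.mk_isDiag_iff]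
    exact fun h => (Finset.mem_erase.1 hw).1 h.symm
  have hpig := Finset.exists_lt_card_fiber_of_mul_lt_card_of_maps_to hmaps
    (t := Finset.range k) (n := r - 1) (by rw [Finset.card_range, hscard]; omega)
  obtain ⟨x, -, hx⟩ := hpig
  set F := Finset.filter (fun w => c s(v0, w) = x) s with hF
  have hrF : r ≤ F.card := by omega
  let g := F.orderEmbOfCardLe hrF
  have hgF : ∀ j, g j ∈ F := fun j => F.orderEmbOfCardLe_mem hrF j
  have hgne : ∀ j, g j ≠ v0 := by
    intro j
    have := (Finset.mem_filter.1 (hgF j)).1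
    exact (Finset.mem_erase.1 this).1
  have hgx : ∀ j, c s(v0, g j) = x := fun j => (Finset.mem_filter.1 (hgF j)).2
  refine ⟨Fin.cases v0 (fun j => g j), x, ?_, ?_⟩
  · intro a b hab
    rcases Fin.eq_zero_or_eq_succ a with rfl | ⟨j, rfl⟩ <;>
      rcases Fin.eq_zero_or_eq_succ b with rfl | ⟨j', rfl⟩ <;>
      simp only [Fin.cases_zero, Fin.cases_succ] at hab
    · rfl
    · exact absurd hab.symm (hgne j')
    · exact absurd hab (hgne j)
    · exact congrArg Fin.succ (g.injective hab)
  · intro a b hab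
    rw [starGraph, SimpleGraph.fromRel_adj] at hab
    obtain ⟨hne, h0 | h0⟩ := hab
    · subst h0
      obtain ⟨j, rfl⟩ := (Fin.eq_zero_or_eq_succ b).resolve_left (Ne.symm hne)
      simpa only [Fin.cases_zero, Fin.cases_succ] using hgx j
    · subst h0
      obtain ⟨j, rfl⟩ := (Fin.eq_zero_or_eq_succ a).resolve_left hne
      rw [Sym2.eq_swap]
      simpa only [Fin.cases_zero, Fin.cases_succ] using hgx j

theorem list_ramsey_star_partition (n t k r : ℕ) (hn : 0 < n) (ht : 0 < t)
    (hk : 0 < k) (hr : 0 < r) (G : Fin t → SimpleGraph (Fin n))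
    (hpart : ∀ e : Sym2 (Fin n), ¬ e.IsDiag → ∃! i : Fin t, e ∈ (G i).edgeSet)
    (hlist : ∀ i : Fin t, EdgeListColorable (G i) k)
    (hdeg : ∀ v : Fin n, {i : Fin t | ∃ w, (G i).Adj v w}.ncard ≤ r - 1) :
    n < listRamsey (starGraph r) k := by
  classical
  rw [listRamsey]
  have hmem : (k * (r - 1) + 2) ∈ { m : ℕ | ∃ L : Sym2 (Fin m) → Finset ℕ,
      (∀ e : Sym2 (Fin m), ¬ e.IsDiag → (L e).card = k) ∧
      ∀ c : Sym2 (Fin m) → ℕ, (∀ e : Sym2 (Fin m), ¬ e.IsDiag → c e ∈ L e) →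
        HasMonoCopy (starGraph r) c } :=
    ⟨fun _ => Finset.range k, fun e _ => Finset.card_range k,
      fun c hc => star_forced k r hr c hc⟩
  have hlow : ∀ m ∈ { m : ℕ | ∃ L : Sym2 (Fin m) → Finset ℕ,
      (∀ e : Sym2 (Fin m), ¬ e.IsDiag → (L e).card = k) ∧
      ∀ c : Sym2 (Fin m) → ℕ, (∀ e : Sym2 (Fin m), ¬ e.IsDiag → c e ∈ L e) →
        HasMonoCopy (starGraph r) c }, n < m := by
    intro m hm
    by_contra hle
    push_neg at hle
    obtain ⟨L, hL, hforce⟩ := hm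
    rcases Nat.eq_zero_or_pos m with rfl | hm0
    · obtain ⟨f, -, -, -⟩ := hforce (fun _ => 0) (by
        intro e
        induction e using Sym2.ind with
        | _ a b => exact a.elim0)
      exact (f 0).elim0
    -- m > 0, m ≤ n
    set ι : Fin m → Fin n := Fin.castLE hle with hι
    have hιinj : Function.Injective ι := Fin.castLE_injective hle
    set p : Fin n → Fin m := fun x => if h : x.val < m then ⟨x.val, h⟩ else ⟨0, hm0⟩ with hp
    have hpι : ∀ a : Fin m, p (ι a) = a := by
      intro a; simp [hp, hι, a.isLt, Fin.ext_iff]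
    have hmapback : ∀ e' : Sym2 (Fin m), Sym2.map p (Sym2.map ι e') = e' := by
      intro e'
      rw [Sym2.map_map]
      have : p ∘ ι = id := funext hpι
      rw [this, Sym2.map_id]
      rfl
    set L' : Sym2 (Fin n) → Finset ℕ :=
      fun e => if (∀ x ∈ e, x.val < m) then L (Sym2.map p e) else Finset.range k with hL'
    have hL'card : ∀ i : Fin t, ∀ e ∈ (G i).edgeSet, (L' e).card = k := by
      intro i e he
      have hnd : ¬ e.IsDiag := (G i).not_isDiag_of_mem_edgeSet he
      rw [hL']
      beta_reduce
      split_ifs with hcond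
      · refine hL _ ?_
        induction e using Sym2.ind with
        | _ a b =>
          rw [Sym2.map_pair_eq, Sym2.mk_isDiag_iff]
          rw [Sym2.mk_isDiag_iff] at hnd
          intro hpe
          apply hnd
          have ha := hcond a (Sym2.mem_mk_left a b)
          have hb := hcond b (Sym2.mem_mk_right a b)
          simp only [hp, dif_pos ha, dif_pos hb, Fin.mk.injEq] at hpe
          exact Fin.ext hpe
      · exact Finset.card_range k
    -- proper list colourings of each G i
    set cc : Fin t → Sym2 (Fin n) → ℕ := fun i => (hlist i L' (hL'card i)).choose with hcc
    have hccspec : ∀ i, (∀ e ∈ (G i).edgeSet, cc i e ∈ L' e) ∧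
        ∀ a b b', (G i).Adj a b → (G i).Adj a b' → b ≠ b' →
          cc i s(a, b) ≠ cc i s(a, b') :=
      fun i => (hlist i L' (hL'card i)).choose_spec
    -- the index of the unique graph containing an edge
    set I : Sym2 (Fin n) → Fin t :=
      fun e => if h : ∃ i, e ∈ (G i).edgeSet then h.choose else ⟨0, ht⟩ with hI
    have hImem : ∀ e : Sym2 (Fin n), ¬ e.IsDiag → e ∈ (G (I e)).edgeSet := by
      intro e he
      obtain ⟨i, hi, -⟩ := hpart e he
      rw [hI]
      beta_reduce
      rw [dif_pos ⟨i, hi⟩]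
      exact (⟨i, hi⟩ : ∃ i, e ∈ (G i).edgeSet).choose_spec
    have hIuniq : ∀ e : Sym2 (Fin n), ¬ e.IsDiag → ∀ i, e ∈ (G i).edgeSet → i = I e := by
      intro e he i hi
      obtain ⟨j, hj, hju⟩ := hpart e he
      rw [hju i hi, hju (I e) (hImem e he)]
    set c : Sym2 (Fin m) → ℕ := fun e' => cc (I (Sym2.map ι e')) (Sym2.map ι e') with hc
    have hmapnd : ∀ e' : Sym2 (Fin m), ¬ e'.IsDiag → ¬ (Sym2.map ι e').IsDiag := by
      intro e' he'
      induction e' using Sym2.ind with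
      | _ a b =>
        rw [Sym2.map_pair_eq, Sym2.mk_isDiag_iff]
        rw [Sym2.mk_isDiag_iff] at he'
        exact fun h => he' (hιinj h)
    have hL'eq : ∀ e' : Sym2 (Fin m), L' (Sym2.map ι e') = L e' := by
      intro e'
      rw [hL']
      beta_reduce
      have hcond : ∀ x ∈ Sym2.map ι e', x.val < m := by
        intro x hx
        obtain ⟨y, -, rfl⟩ := Sym2.mem_map.1 hx
        exact y.isLt
      rw [if_pos hcond, hmapback]
    have hadm : ∀ e' : Sym2 (Fin m), ¬ e'.IsDiag → c e' ∈ L e' := by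
      intro e' he'
      have hnd := hmapnd e' he'
      have hedge := hImem _ hnd
      have := (hccspec (I (Sym2.map ι e'))).1 _ hedge
      rw [hL'eq] at this
      exact this
    have hnomono : ¬ HasMonoCopy (starGraph r) c := by
      rintro ⟨f, x, hf, hmono⟩
      set v : Fin n := ι (f 0) with hv
      set φ : Fin r → Fin t := fun j => I s(v, ι (f j.succ)) with hφ
      have hfne : ∀ j : Fin r, f j.succ ≠ f 0 := by
        intro j h
        exact (Fin.succ_ne_zero j) (hf h)
      have hndj : ∀ j : Fin r, ¬ (s(v, ι (f j.succ)) : Sym2 (Fin n)).IsDiag := by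
        intro j
        rw [Sym2.mk_isDiag_iff]
        exact fun h => (hfne j) (hιinj h.symm)
      have hedgej : ∀ j : Fin r, s(v, ι (f j.succ)) ∈ (G (φ j)).edgeSet :=
        fun j => hImem _ (hndj j)
      have hadj : ∀ j : Fin r, (G (φ j)).Adj v (ι (f j.succ)) :=
        fun j => (SimpleGraph.mem_edgeSet _).1 (hedgej j)
      have hcol : ∀ j : Fin r, cc (φ j) s(v, ι (f j.succ)) = x := by
        intro j
        have hadj0 : (starGraph r).Adj 0 j.succ := by
          rw [starGraph, SimpleGraph.fromRel_adj]
          exact ⟨(Fin.succ_ne_zero j).symm, Or.inl rfl⟩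
        have := hmono 0 j.succ hadj0
        rw [hc] at this
        simpa [Sym2.map_pair_eq, hv, hφ] using this
      have hφinj : Function.Injective φ := by
        intro j j' hjj
        by_contra hne
        have hne' : ι (f j.succ) ≠ ι (f j'.succ) := by
          intro h
          exact hne (Fin.succ_injective _ (hf (hιinj h)))
        have hprop := (hccspec (φ j)).2 v (ι (f j.succ)) (ι (f j'.succ))
          (hadj j) (hjj ▸ hadj j') hne'
        rw [hcol j, hjj, hcol j'] at hprop
        exact hprop rfl
      have hsub : ∀ j : Fin r, φ j ∈ {i : Fin t | ∃ w, (G i).Adj v w} :=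
        fun j => ⟨ι (f j.succ), hadj j⟩
      have hcard : r ≤ ({i : Fin t | ∃ w, (G i).Adj v w}).ncard := by
        have := Set.ncard_le_ncard_of_injOn (s := (Set.univ : Set (Fin r))) φ
          (fun a _ => hsub a) hφinj.injOn (Set.toFinite _)
        rwa [Set.ncard_univ, Nat.card_eq_fintype_card, Fintype.card_fin] at this
      have := hdeg v
      omega
    exact hnomono (hforce c hadm)
  have hsinf := Nat.sInf_mem ⟨_, hmem⟩
  exact hlow _ hsinf
end

section
/- Let r and k be positive integers with 0 < log r < 2(k+1). Then rk/(4·log(rk)) ≤ R_ℓ(rK_2, k) ≤ 34·rk/log(rk). -/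
/-!
Lower bound: on `n` vertices with `n log n < (r - 1) k`, choose for every colour a random set of
`r - 1` vertices. With positive probability every edge has a colour in its list whose set meets
it; colouring each edge by such a colour leaves every colour class covered by `r - 1` vertices,
so no colour class contains `r` disjoint edges.

Upper bound: a colouring without a monochromatic `rK₂` has every colour class covered by the
`2 (r - 1)` vertices of a maximal matching. If `log (rk) ≤ 17`, give every edge of
`K_{2(r-1)k+2}` the same `k` colours: the covers miss two vertices. Otherwise give the edges of
`K_n`, `n = ⌊34 rk / log (rk)⌋`, independent uniformly random `k`-subsets of `6k` colours. For a
fixed family of covers, at least `n (n - 2) / 8` edges join two vertices lying in few covers,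
and the list of such an edge avoids all covers meeting it with probability at least
`(rk) ^ (-3/5)`. A union bound over the at most `(n + 1) ^ (12 (r - 1) k)` families of covers
leaves a list assignment for which every family of covers misses some edge entirely.
-/

/-- The matching `rK₂` consisting of `r` pairwise disjoint edges `{2i, 2i+1}`. -/
def matchingGraph (r : ℕ) : SimpleGraph (Fin (2 * r)) :=
  SimpleGraph.fromRel (fun a b => (b : ℕ) = (a : ℕ) + 1 ∧ (a : ℕ) % 2 = 0)

open Finset

section VertexDisjoint

variable {α : Type*}

def PairwiseVertexDisjoint (M : Finset (Sym2 α)) : Prop :=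
  (M : Set (Sym2 α)).Pairwise fun e e' => ∀ v ∈ e, v ∉ e'

theorem PairwiseVertexDisjoint.card_le {M : Finset (Sym2 α)} {V : Finset α}
    (hM : PairwiseVertexDisjoint M) (hV : ∀ e ∈ M, ∃ v ∈ V, v ∈ e) : #M ≤ #V := by
  refine card_le_card_of_forall_subsingleton (fun e v => v ∈ e) (by simpa using hV)
    fun v _ e he e' he' => ?_
  by_contra hne
  exact hM he.1 he'.1 hne v he.2 he'.2

theorem exists_pairwiseVertexDisjoint_or_cover [DecidableEq α] (S : Finset (Sym2 α)) (r : ℕ) :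
    (∃ M ⊆ S, #M = r ∧ PairwiseVertexDisjoint M) ∨
      ∃ V : Finset α, #V ≤ 2 * (r - 1) ∧ ∀ e ∈ S, ∃ v ∈ V, v ∈ e := by
  classical
  obtain ⟨M, hM, hmax⟩ := exists_max_image (S.powerset.filter PairwiseVertexDisjoint) card
    ⟨∅, by simp [PairwiseVertexDisjoint]⟩
  obtain ⟨hMS, hdisj⟩ := mem_filter.mp hM
  rw [mem_powerset] at hMS
  by_cases hr : r ≤ #M
  · obtain ⟨M', hM'M, hcard⟩ := exists_subset_card_eq hr
    exact .inl ⟨M', hM'M.trans hMS, hcard, hdisj.mono (by exact_mod_cast hM'M)⟩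
  refine .inr ⟨M.biUnion Sym2.toFinset, ?_, fun e he => ?_⟩
  · calc #(M.biUnion Sym2.toFinset) ≤ ∑ e ∈ M, #e.toFinset := card_biUnion_le
      _ ≤ ∑ _e ∈ M, 2 := sum_le_sum fun e _ => by rw [Sym2.card_toFinset]; split_ifs <;> omega
      _ ≤ 2 * (r - 1) := by rw [sum_const, smul_eq_mul]; omega
  by_contra! hfree
  simp only [mem_biUnion, Sym2.mem_toFinset] at hfree
  have heM : e ∉ M := fun heM => hfree _ ⟨e, heM, Sym2.out_fst_mem e⟩ (Sym2.out_fst_mem e)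
  have hins : insert e M ∈ S.powerset.filter PairwiseVertexDisjoint := by
    refine mem_filter.mpr ⟨mem_powerset.mpr (insert_subset he hMS), ?_⟩
    rw [PairwiseVertexDisjoint, coe_insert, Set.pairwise_insert]
    exact ⟨hdisj, fun e' he' _ =>
      ⟨fun v hv hv' => hfree v ⟨e', he', hv'⟩ hv, fun v hv' hv => hfree v ⟨e', he', hv'⟩ hv⟩⟩
  have := hmax _ hins
  rw [card_insert_of_notMem heM] at this
  omega

end VertexDisjoint

theorem matchingGraph_adj {r : ℕ} {a b : Fin (2 * r)} :
    (matchingGraph r).Adj a b ↔ a ≠ b ∧ (a : ℕ) / 2 = (b : ℕ) / 2 := by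
  simp only [matchingGraph, SimpleGraph.fromRel_adj, ne_eq, and_congr_right_iff]
  intro hab
  have : (a : ℕ) ≠ b := fun h => hab (Fin.ext h)
  omega

theorem HasMonoCopy.card_le {α β : Type*} [Fintype α] {G : SimpleGraph α} {n : ℕ}
    {c : Sym2 (Fin n) → β} (h : HasMonoCopy G c) : Fintype.card α ≤ n := by
  obtain ⟨f, -, hf, -⟩ := h
  simpa using Fintype.card_le_of_injective f hf

theorem HasMonoCopy.exists_matching {β : Type*} {r n : ℕ} {c : Sym2 (Fin n) → β}
    (h : HasMonoCopy (matchingGraph r) c) : ∃ x, ∃ M : Finset (Sym2 (Fin n)),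
      #M = r ∧ PairwiseVertexDisjoint M ∧ ∀ e ∈ M, ¬ e.IsDiag ∧ c e = x := by
  obtain ⟨f, x, hf, hc⟩ := h
  let lo (i : Fin r) : Fin (2 * r) := ⟨2 * i, by omega⟩
  let hi (i : Fin r) : Fin (2 * r) := ⟨2 * i + 1, by omega⟩
  let edge (i : Fin r) : Sym2 (Fin n) := s(f (lo i), f (hi i))
  have hadj (i : Fin r) : (matchingGraph r).Adj (lo i) (hi i) := by
    rw [matchingGraph_adj]
    exact ⟨fun h => by simpa [lo, hi] using congrArg Fin.val h, by simp [lo, hi]; omega⟩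
  have hmem {i j : Fin r} {v : Fin n} (hvi : v ∈ edge i) (hvj : v ∈ edge j) : i = j := by
    simp only [edge, Sym2.mem_iff] at hvi hvj
    apply Fin.ext
    rcases hvi with rfl | rfl <;> rcases hvj with h | h <;>
      · have := congrArg Fin.val (hf h)
        simp only [lo, hi] at this
        omega
  have hinj : Function.Injective edge := fun i j h =>
    hmem (Sym2.mem_mk_left _ _) (h ▸ Sym2.mem_mk_left _ _)
  refine ⟨x, univ.image edge, by simp [card_image_of_injective _ hinj], ?_, ?_⟩
  · simp only [PairwiseVertexDisjoint, coe_image, coe_univ, Set.image_univ]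
    rintro _ ⟨i, rfl⟩ _ ⟨j, rfl⟩ hne v hvi hvj
    exact hne (congrArg edge (hmem hvi hvj))
  · simp only [mem_image, mem_univ, true_and, forall_exists_index, forall_apply_eq_imp_iff]
    exact fun i => ⟨fun h => (hadj i).ne (hf (Sym2.mk_isDiag_iff.mp h)), hc _ _ (hadj i)⟩

theorem hasMonoCopy_matchingGraph_of_matching {β : Type*} {r n : ℕ} {c : Sym2 (Fin n) → β}
    {x : β} {M : Finset (Sym2 (Fin n))} (hcard : #M = r) (hdisj : PairwiseVertexDisjoint M)
    (hM : ∀ e ∈ M, ¬ e.IsDiag ∧ c e = x) : HasMonoCopy (matchingGraph r) c := by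
  let g : Fin r ≃ M := (M.equivFinOfCardEq hcard).symm
  let edge (j : Fin (2 * r)) : Sym2 (Fin n) := g ⟨j / 2, by omega⟩
  let f (j : Fin (2 * r)) : Fin n := if (j : ℕ) % 2 = 0 then (edge j).out.1 else (edge j).out.2
  have hf_mem (j) : f j ∈ edge j := by
    unfold f; split_ifs; exacts [Sym2.out_fst_mem _, Sym2.out_snd_mem _]
  have hedge_mem (j) : edge j ∈ M := (g _).2
  have hout (e : Sym2 (Fin n)) : s(e.out.1, e.out.2) = e := Quot.out_eq e
  have hout_ne (j) : (edge j).out.1 ≠ (edge j).out.2 := fun h =>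
    (hM _ (hedge_mem j)).1 (hout (edge j) ▸ Sym2.mk_isDiag_iff.mpr h)
  refine ⟨f, x, fun j j' hjj' => ?_, fun a b hab => ?_⟩
  · have hedge : edge j = edge j' := by
      by_contra hne
      exact hdisj (hedge_mem j) (hedge_mem j') hne _ (hf_mem j) (hjj' ▸ hf_mem j')
    have hhalf : (j : ℕ) / 2 = j' / 2 := by
      simpa using congrArg Fin.val (g.injective (Subtype.ext hedge))
    apply Fin.ext
    unfold f at hjj'
    rw [hedge] at hjj'
    split_ifs at hjj' <;>
      first | omega | exact absurd hjj' (hout_ne j') | exact absurd hjj'.symm (hout_ne j')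
  · obtain ⟨hne, hhalf⟩ := matchingGraph_adj.mp hab
    have hedge : edge a = edge b := by simp only [edge, hhalf]
    have hval : (a : ℕ) ≠ b := fun h => hne (Fin.ext h)
    have hs : s(f a, f b) = edge a := by
      unfold f
      rw [hedge]
      split_ifs <;> first | omega | exact hout _ | exact Sym2.eq_swap.trans (hout _)
    rw [hs]
    exact (hM _ (hedge_mem a)).2

section MatchingCovers

variable {β : Type*} {r n : ℕ} {c : Sym2 (Fin n) → β}

theorem not_hasMonoCopy_matchingGraph_of_cover (V : β → Finset (Fin n)) (hV : ∀ x, #(V x) < r)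
    (hc : ∀ e, ¬ e.IsDiag → ∃ v ∈ V (c e), v ∈ e) : ¬ HasMonoCopy (matchingGraph r) c := by
  intro h
  obtain ⟨x, M, hcard, hdisj, hM⟩ := h.exists_matching
  have := hdisj.card_le fun e he => (hM e he).2 ▸ hc e (hM e he).1
  exact (hcard ▸ this).not_gt (hV x)

theorem exists_cover_of_not_hasMonoCopy_matchingGraph (h : ¬ HasMonoCopy (matchingGraph r) c) :
    ∃ V : β → Finset (Fin n), (∀ x, #(V x) ≤ 2 * (r - 1)) ∧
      ∀ e, ¬ e.IsDiag → ∃ v ∈ V (c e), v ∈ e := by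
  classical
  have (x : β) : ∃ V : Finset (Fin n), #V ≤ 2 * (r - 1) ∧
      ∀ e ∈ univ.filter (fun e => ¬ e.IsDiag ∧ c e = x), ∃ v ∈ V, v ∈ e := by
    refine (exists_pairwiseVertexDisjoint_or_cover _ r).resolve_left ?_
    rintro ⟨M, hMS, hcard, hdisj⟩
    exact h (hasMonoCopy_matchingGraph_of_matching hcard hdisj fun e he => by simpa using hMS he)
  choose V hVcard hV using this
  exact ⟨V, hVcard, fun e he => hV (c e) e (by simp [he])⟩

end MatchingCovers

def HasForcingLists {α : Type*} (G : SimpleGraph α) (k n : ℕ) : Prop :=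
  ∃ L : Sym2 (Fin n) → Finset ℕ, (∀ e : Sym2 (Fin n), ¬ e.IsDiag → (L e).card = k) ∧
    ∀ c : Sym2 (Fin n) → ℕ, (∀ e : Sym2 (Fin n), ¬ e.IsDiag → c e ∈ L e) → HasMonoCopy G c

theorem listRamsey_le {α : Type*} {G : SimpleGraph α} {k n : ℕ} (h : HasForcingLists G k n) :
    listRamsey G k ≤ n :=
  Nat.sInf_le h

theorem HasForcingLists.listRamsey {α : Type*} {G : SimpleGraph α} {k n : ℕ}
    (h : HasForcingLists G k n) : HasForcingLists G k (listRamsey G k) :=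
  Nat.sInf_mem (s := {n | HasForcingLists G k n}) ⟨n, h⟩

theorem hasForcingLists_matchingGraph_of_uncovered {r k n m : ℕ}
    (L : Sym2 (Fin n) → Finset (Fin m)) (hL : ∀ e, ¬ e.IsDiag → #(L e) = k)
    (h : ∀ 𝒱 : Fin m → Finset (Fin n), (∀ i, #(𝒱 i) ≤ 2 * (r - 1)) →
      ∃ e, ¬ e.IsDiag ∧ ∀ i ∈ L e, ∀ v ∈ 𝒱 i, v ∉ e) :
    HasForcingLists (matchingGraph r) k n := by
  refine ⟨fun e => (L e).map Fin.valEmbedding, fun e he => by simp [hL e he], fun c hc => ?_⟩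
  by_contra hno
  obtain ⟨V, hVcard, hV⟩ := exists_cover_of_not_hasMonoCopy_matchingGraph hno
  obtain ⟨e, he, hfree⟩ := h (fun i => V i) fun i => hVcard i
  obtain ⟨i, hi, hce⟩ := mem_map.mp (hc e he)
  obtain ⟨v, hv, hve⟩ := hV e he
  exact hfree i hi v (by simpa [← hce] using hv) hve

theorem hasForcingLists_matchingGraph_two_mul (r k : ℕ) :
    HasForcingLists (matchingGraph r) k (2 * (r - 1) * k + 2) := by
  refine hasForcingLists_matchingGraph_of_uncovered (m := k) (fun _ => univ) (by simp)
    fun 𝒱 h𝒱 => ?_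
  have hU : #(univ.biUnion 𝒱) ≤ 2 * (r - 1) * k :=
    calc #(univ.biUnion 𝒱) ≤ ∑ i, #(𝒱 i) := card_biUnion_le
      _ ≤ ∑ _i : Fin k, 2 * (r - 1) := sum_le_sum fun i _ => h𝒱 i
      _ = 2 * (r - 1) * k := by simp [mul_comm]
  obtain ⟨a, ha, b, hb, hab⟩ := one_lt_card.mp (show 1 < #(univ.biUnion 𝒱)ᶜ by
    rw [card_compl, Fintype.card_fin]; omega)
  refine ⟨s(a, b), by simpa using hab, fun i _ v hv hve => ?_⟩
  have hvU : v ∈ univ.biUnion 𝒱 := mem_biUnion.mpr ⟨i, mem_univ _, hv⟩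
  rcases Sym2.mem_iff.mp hve with rfl | rfl
  exacts [mem_compl.mp ha hvU, mem_compl.mp hb hvU]

theorem exists_mem_forall_notMem_of_sum_card_lt {α ι : Type*} [DecidableEq α] {s : Finset α}
    {I : Finset ι} {B : ι → Finset α} (h : ∑ i ∈ I, #(B i) < #s) : ∃ a ∈ s, ∀ i ∈ I, a ∉ B i := by
  by_contra! hall
  have : s ⊆ I.biUnion B := fun a ha => mem_biUnion.mpr (hall a ha)
  exact (card_le_card this |>.trans card_biUnion_le).not_gt h

theorem card_piFinset_ite_mul_pow {ι β : Type*} [Fintype ι] [DecidableEq ι]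
    (A : Finset ι) (s t : Finset β) :
    #(Fintype.piFinset fun a => if a ∈ A then s else t) * #t ^ #A =
      #s ^ #A * #t ^ Fintype.card ι := by
  rw [Fintype.card_piFinset, prod_congr rfl fun a _ => apply_ite card (a ∈ A) s t, prod_ite,
    prod_const, prod_const, filter_mem_eq_inter, univ_inter, filter_not, filter_mem_eq_inter,
    univ_inter, card_sdiff_of_subset (subset_univ A), card_univ, mul_assoc, ← pow_add,
    Nat.sub_add_cancel (card_le_univ A)]

theorem card_filter_notMem_sym2 {V : Type*} [Fintype V] [DecidableEq V] {e : Sym2 V}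
    (he : ¬ e.IsDiag) : #(univ.filter (· ∉ e)) = Fintype.card V - 2 := by
  have : univ.filter (· ∉ e) = e.toFinsetᶜ := by ext; simp
  rw [this, card_compl, Sym2.card_toFinset_of_not_isDiag e he]

theorem exists_hitting_map {ι V : Type*} [Fintype ι] [DecidableEq ι] [Fintype V] [DecidableEq V]
    [Nonempty V] (S : Finset (Sym2 V)) (A : Sym2 V → Finset ι) {k s : ℕ}
    (hS : ∀ e ∈ S, ¬ e.IsDiag) (hA : ∀ e ∈ S, #(A e) = k)
    (h : #S * (Fintype.card V - 2) ^ (s * k) < Fintype.card V ^ (s * k)) :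
    ∃ F : ι → Fin s → V, ∀ e ∈ S, ∃ a ∈ A e, ∃ i, F a i ∈ e := by
  set n := Fintype.card V
  let missing (e : Sym2 V) : Finset (Fin s → V) := Fintype.piFinset fun _ => univ.filter (· ∉ e)
  let bad (e : Sym2 V) : Finset (ι → Fin s → V) :=
    Fintype.piFinset fun a => if a ∈ A e then missing e else univ
  have hbad (e) (he : e ∈ S) :
      #(bad e) * n ^ (s * k) = (n - 2) ^ (s * k) * (n ^ s) ^ Fintype.card ι := by
    have hmissing : #(missing e) = (n - 2) ^ s := by
      simp [missing, card_filter_notMem_sym2 (hS e he), n]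
    have := card_piFinset_ite_mul_pow (A e) (missing e) univ
    rw [hmissing, card_univ, Fintype.card_fun, Fintype.card_fin, hA e he, ← pow_mul,
      ← pow_mul] at this
    exact this
  have hsum : ∑ e ∈ S, #(bad e) < #(univ : Finset (ι → Fin s → V)) := by
    refine Nat.lt_of_mul_lt_mul_right (a := n ^ (s * k)) ?_
    rw [sum_mul, sum_congr rfl hbad, sum_const, smul_eq_mul, card_univ, Fintype.card_fun,
      Fintype.card_fun, Fintype.card_fin, ← mul_assoc, mul_comm _ (n ^ (s * k))]
    exact Nat.mul_lt_mul_of_pos_right h (pow_pos (pow_pos Fintype.card_pos _) _)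
  obtain ⟨F, -, hF⟩ := exists_mem_forall_notMem_of_sum_card_lt hsum
  refine ⟨F, fun e he => ?_⟩
  have := hF e he
  simp only [bad, missing, Fintype.mem_piFinset, not_forall] at this
  obtain ⟨a, ha⟩ := this
  split_ifs at ha with haA
  · simp only [Fintype.mem_piFinset, mem_filter, mem_univ, true_and, not_forall, not_not] at ha
    exact ⟨a, haA, ha⟩
  · exact absurd (mem_univ _) ha

theorem sq_mul_sub_two_pow_lt_pow {n m : ℕ} (hn : 2 ≤ n) (h : (n : ℝ) * Real.log n < m) :
    n ^ 2 * (n - 2) ^ m < n ^ m := by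
  have hn0 : (0 : ℝ) < n := by positivity
  have hstep : (n : ℝ) - 2 ≤ n * Real.exp (-(2 / n)) := by
    have := Real.one_sub_le_exp_neg (2 / n)
    rw [sub_le_iff_le_add] at this ⊢
    calc (n : ℝ) = n * (1 - 2 / n) + 2 := by field_simp; ring
      _ ≤ _ := by gcongr; linarith
  have hsmall : (n : ℝ) ^ 2 * Real.exp (-(2 / n)) ^ m < 1 := by
    rw [show (n : ℝ) ^ 2 = Real.exp (Real.log n) ^ 2 by rw [Real.exp_log hn0],
      ← Real.exp_nat_mul, ← Real.exp_nat_mul, ← Real.exp_add, Real.exp_lt_one_iff]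
    rw [← lt_div_iff₀' hn0] at h
    have : (m : ℝ) * (2 / n) = 2 * (m / n) := by ring
    push_cast
    linarith
  suffices (n : ℝ) ^ 2 * ((n : ℝ) - 2) ^ m < (n : ℝ) ^ m by exact_mod_cast this
  calc (n : ℝ) ^ 2 * ((n : ℝ) - 2) ^ m ≤ n ^ 2 * (n * Real.exp (-(2 / n))) ^ m := by
        gcongr
        linarith [show (2 : ℝ) ≤ n by exact_mod_cast hn]
    _ = n ^ m * (n ^ 2 * Real.exp (-(2 / n)) ^ m) := by ring
    _ < n ^ m := mul_lt_of_lt_one_right (by positivity) hsmall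

theorem not_hasForcingLists_of_lt_card {α : Type*} [Fintype α] {G : SimpleGraph α} {k n : ℕ}
    (hk : 0 < k) (hn : n < Fintype.card α) : ¬ HasForcingLists G k n := by
  rintro ⟨L, hL, hforce⟩
  have (e : Sym2 (Fin n)) : ∃ x, ¬ e.IsDiag → x ∈ L e := by
    by_cases he : e.IsDiag
    · exact ⟨0, fun h => absurd he h⟩
    · exact (card_pos.mp (hL e he ▸ hk)).imp fun x hx _ => hx
  choose c hc using this
  exact hn.not_ge (hforce c hc).card_le

theorem exists_list_colouring_with_small_covers {n k s : ℕ} (L : Sym2 (Fin n) → Finset ℕ)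
    (hL : ∀ e, ¬ e.IsDiag → #(L e) = k) (hn : 2 ≤ n)
    (h : n ^ 2 * (n - 2) ^ (s * k) < n ^ (s * k)) :
    ∃ c : Sym2 (Fin n) → ℕ, (∀ e, ¬ e.IsDiag → c e ∈ L e) ∧ ∃ V : ℕ → Finset (Fin n),
      (∀ x, #(V x) ≤ s) ∧ ∀ e, ¬ e.IsDiag → ∃ v ∈ V (c e), v ∈ e := by
  have hsk : 0 < s * k := Nat.pos_of_ne_zero fun h0 => by simp [h0] at h; nlinarith
  have : Nonempty (Fin n) := ⟨⟨0, by omega⟩⟩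
  let T := univ.biUnion L
  let S := univ.filter fun e : Sym2 (Fin n) => ¬ e.IsDiag
  have hS_mem {e : Sym2 (Fin n)} (he : ¬ e.IsDiag) : e ∈ S := mem_filter.mpr ⟨mem_univ _, he⟩
  let A (e : Sym2 (Fin n)) : Finset T := (L e).subtype (· ∈ T)
  have hA (e) (he : e ∈ S) : #(A e) = k := by
    have hLT : ∀ x ∈ L e, x ∈ T := fun x hx => mem_biUnion.mpr ⟨e, mem_univ _, hx⟩
    rw [card_subtype, filter_true_of_mem hLT, hL e (mem_filter.mp he).2]
  have hS : #S * (n - 2) ^ (s * k) < n ^ (s * k) := by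
    have hSn : #S ≤ n ^ 2 :=
      calc #S ≤ Fintype.card (Sym2 (Fin n)) := card_le_univ S
        _ = (n + 1) * n / 2 := by rw [Sym2.card, Fintype.card_fin, Nat.choose_two_right]; rfl
        _ ≤ n ^ 2 := Nat.div_le_of_le_mul (by nlinarith)
    exact (Nat.mul_le_mul_right _ hSn).trans_lt h
  obtain ⟨F, hF⟩ := exists_hitting_map S A (fun e he => (mem_filter.mp he).2) hA
    (by simpa using hS)
  have : Nonempty T := by
    obtain ⟨x, hx⟩ := card_pos.mp ((hL s(⟨0, by omega⟩, ⟨1, by omega⟩) (by simp)).trans_gt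
      (Nat.pos_of_mul_pos_left hsk))
    exact ⟨⟨x, mem_biUnion.mpr ⟨_, mem_univ _, hx⟩⟩⟩
  have : Nonempty (Fin s) := ⟨⟨0, Nat.pos_of_mul_pos_right hsk⟩⟩
  choose! col hcol idx hidx using hF
  refine ⟨fun e => col e, fun e he => by simpa [A] using hcol e (hS_mem he),
    fun x => if hx : x ∈ T then univ.image (F ⟨x, hx⟩) else ∅, fun x => ?_,
    fun e he => ⟨F (col e) (idx e), by simp, hidx e (hS_mem he)⟩⟩
  dsimp only
  split_ifs
  · exact card_image_le.trans_eq (card_fin _)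
  · exact card_empty.trans_le (Nat.zero_le _)

theorem not_hasForcingLists_matchingGraph {r k n : ℕ}
    (h : (n : ℝ) * Real.log n < ((r - 1) * k : ℕ)) : ¬ HasForcingLists (matchingGraph r) k n := by
  have hrk : 0 < (r - 1) * k := by
    have : 0 ≤ (n : ℝ) * Real.log n := mul_nonneg n.cast_nonneg (Real.log_natCast_nonneg n)
    exact_mod_cast this.trans_lt h
  have hr : 0 < r - 1 := Nat.pos_of_mul_pos_right hrk
  by_cases hn : n < 2 * r
  · exact not_hasForcingLists_of_lt_card (Nat.pos_of_mul_pos_left hrk) (by simpa using hn)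
  rintro ⟨L, hL, hforce⟩
  obtain ⟨c, hc, V, hV, hcover⟩ := exists_list_colouring_with_small_covers (s := r - 1) L hL
    (by omega) (sq_mul_sub_two_pow_lt_pow (by omega) h)
  exact not_hasMonoCopy_matchingGraph_of_cover V (fun x => (hV x).trans_lt (by omega)) hcover
    (hforce c hc)

theorem card_finset_card_le_le_pow (α : Type*) [Fintype α] (s : ℕ) :
    #(univ.filter fun V : Finset α => #V ≤ s) ≤ (Fintype.card α + 1) ^ s := by
  classical
  let enc (V : Finset α) (i : Fin s) : Option α := V.toList[(i : ℕ)]?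
  have henc : Set.InjOn enc (univ.filter fun V : Finset α => #V ≤ s) := by
    intro V hV W hW h
    simp only [coe_filter, mem_univ, true_and, Set.mem_ofPred_eq] at hV hW
    suffices V.toList = W.toList by rw [← toList_toFinset V, this, toList_toFinset]
    refine List.ext_getElem? fun i => ?_
    by_cases hi : i < s
    · exact congrFun h ⟨i, hi⟩
    · rw [List.getElem?_eq_none (by simp; omega), List.getElem?_eq_none (by simp; omega)]
  calc _ ≤ #(univ : Finset (Fin s → Option α)) :=
        card_le_card_of_injOn enc (fun _ _ => mem_coe.mpr (mem_univ _)) henc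
    _ = (Fintype.card α + 1) ^ s := by simp

theorem card_filter_disjoint_powersetCard {α : Type*} [Fintype α] [DecidableEq α] (k : ℕ)
    (D : Finset α) :
    #((powersetCard k univ).filter (Disjoint · D)) = (Fintype.card α - #D).choose k := by
  have : (powersetCard k univ).filter (Disjoint · D) = powersetCard k Dᶜ := by
    ext K
    simp [mem_powersetCard, subset_compl_iff_disjoint_right, and_comm]
  rw [this, card_powersetCard, card_compl]

theorem card_filter_not_disjoint_powersetCard_le {α : Type*} [Fintype α] [DecidableEq α] {k : ℕ}
    {q : ℝ} (D : Finset α)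
    (hD : ((Fintype.card α).choose k : ℝ) * q ≤ (Fintype.card α - #D).choose k) :
    (#((powersetCard k univ).filter (¬ Disjoint · D)) : ℝ) ≤
      (Fintype.card α).choose k * (1 - q) := by
  have hsplit := card_filter_add_card_filter_not (s := powersetCard k univ) (p := (Disjoint · D))
  rw [card_filter_disjoint_powersetCard, card_powersetCard, card_univ] at hsplit
  have hsplit' : ((Fintype.card α - #D).choose k : ℝ) +
      #((powersetCard k univ).filter (¬ Disjoint · D)) = (Fintype.card α).choose k := by
    exact_mod_cast hsplit
  rw [mul_sub, mul_one]
  linarith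

theorem card_piFinset_not_disjoint_le {E : Type*} [Fintype E] [DecidableEq E] {m k : ℕ} {q : ℝ}
    (A : Finset E) (D : E → Finset (Fin m))
    (hD : ∀ e ∈ A, (m.choose k : ℝ) * q ≤ (m - #(D e)).choose k) :
    (#(Fintype.piFinset fun e => if e ∈ A then (powersetCard k univ).filter (¬ Disjoint · (D e))
        else powersetCard k univ) : ℝ) ≤ m.choose k ^ Fintype.card E * (1 - q) ^ #A := by
  calc (#(Fintype.piFinset fun e => if e ∈ A then (powersetCard k univ).filter
          (¬ Disjoint · (D e)) else powersetCard k univ) : ℝ)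
      = ∏ e, (#(if e ∈ A then (powersetCard k univ).filter (¬ Disjoint · (D e))
          else powersetCard k univ) : ℝ) := by simp
    _ ≤ ∏ e, (m.choose k * if e ∈ A then 1 - q else 1 : ℝ) := by
        refine prod_le_prod (fun _ _ => by positivity) fun e _ => ?_
        split_ifs with he
        · simpa using card_filter_not_disjoint_powersetCard_le (D e) (by simpa using hD e he)
        · simp
    _ = m.choose k ^ Fintype.card E * (1 - q) ^ #A := by
        rw [prod_mul_distrib, prod_ite_mem, univ_inter, prod_const, prod_const, card_univ]

theorem exists_lists_disjoint {ι E : Type*} [Fintype E] [DecidableEq E] {m k N : ℕ} {q : ℝ}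
    (𝓕 : Finset ι) (A : ι → Finset E) (D : ι → E → Finset (Fin m)) (hkm : k ≤ m)
    (hq0 : 0 ≤ q) (hq1 : q ≤ 1) (hA : ∀ i ∈ 𝓕, N ≤ #(A i))
    (hD : ∀ i ∈ 𝓕, ∀ e ∈ A i, (m.choose k : ℝ) * q ≤ (m - #(D i e)).choose k)
    (h : #𝓕 * (1 - q) ^ N < 1) :
    ∃ L : E → Finset (Fin m), (∀ e, #(L e) = k) ∧ ∀ i ∈ 𝓕, ∃ e ∈ A i, Disjoint (L e) (D i e) := by
  set C := m.choose k
  let P := powersetCard k (univ : Finset (Fin m))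
  let bad (i : ι) : Finset (E → Finset (Fin m)) :=
    Fintype.piFinset fun e => if e ∈ A i then P.filter (¬ Disjoint · (D i e)) else P
  have hbad (i) (hi : i ∈ 𝓕) : (#(bad i) : ℝ) ≤ C ^ Fintype.card E * (1 - q) ^ N :=
    (card_piFinset_not_disjoint_le (A i) (D i) (hD i hi)).trans (mul_le_mul_of_nonneg_left
      (pow_le_pow_of_le_one (by linarith) (by linarith) (hA i hi)) (by positivity))
  have hC : (0 : ℝ) < C ^ Fintype.card E := pow_pos (by exact_mod_cast Nat.choose_pos hkm) _
  have hsum : ∑ i ∈ 𝓕, #(bad i) < #(Fintype.piFinset fun _ : E => P) := by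
    rw [Fintype.card_piFinset, prod_const, card_powersetCard, card_univ, Fintype.card_fin,
      card_univ]
    suffices (∑ i ∈ 𝓕, #(bad i) : ℝ) < C ^ Fintype.card E by exact_mod_cast this
    calc (∑ i ∈ 𝓕, #(bad i) : ℝ) ≤ ∑ _i ∈ 𝓕, C ^ Fintype.card E * (1 - q) ^ N :=
          sum_le_sum hbad
      _ = C ^ Fintype.card E * (#𝓕 * (1 - q) ^ N) := by rw [sum_const, nsmul_eq_mul]; ring
      _ < C ^ Fintype.card E := mul_lt_of_lt_one_right hC h
  obtain ⟨L, hLP, hL⟩ := exists_mem_forall_notMem_of_sum_card_lt hsum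
  rw [Fintype.mem_piFinset] at hLP
  refine ⟨L, fun e => (mem_powersetCard.mp (hLP e)).2, fun i hi => ?_⟩
  have := hL i hi
  simp only [bad, Fintype.mem_piFinset, not_forall] at this
  obtain ⟨e, he⟩ := this
  split_ifs at he with heA
  · exact ⟨e, heA, by simpa [hLP e] using he⟩
  · exact absurd (hLP e) he

def indicesMeeting {ι V : Type*} [Fintype ι] [DecidableEq V] (𝒱 : ι → Finset V) (e : Sym2 V) :
    Finset ι :=
  univ.filter fun i => ∃ v ∈ 𝒱 i, v ∈ e

section LowDegree

variable {ι V : Type*} [Fintype ι] [Fintype V] [DecidableEq V] (𝒱 : ι → Finset V) {σ : ℕ}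

theorem exists_low_degree_half (hσ : ∑ i, #(𝒱 i) ≤ σ) :
    ∃ W : Finset V, Fintype.card V ≤ 2 * #W ∧
      ∀ v ∈ W, Fintype.card V * #(univ.filter fun i => v ∈ 𝒱 i) ≤ 2 * σ := by
  set n := Fintype.card V
  let deg (v : V) := #(univ.filter fun i => v ∈ 𝒱 i)
  have hdeg : ∑ v, deg v ≤ σ := by
    calc ∑ v, deg v = ∑ i, #(univ.filter (· ∈ 𝒱 i)) := by
          simp only [deg, card_filter]; exact sum_comm
      _ = ∑ i, #(𝒱 i) := by simp
      _ ≤ σ := hσ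
  let W := univ.filter fun v => n * deg v ≤ 2 * σ
  refine ⟨W, ?_, fun v hv => (mem_filter.mp hv).2⟩
  have hmarkov : #Wᶜ * (2 * σ + 1) ≤ n * σ :=
    calc #Wᶜ * (2 * σ + 1) = ∑ _v ∈ Wᶜ, (2 * σ + 1) := by rw [sum_const, smul_eq_mul]
      _ ≤ ∑ v ∈ Wᶜ, n * deg v := sum_le_sum fun v hv => by simp [W] at hv; omega
      _ ≤ ∑ v, n * deg v := sum_le_sum_of_subset (subset_univ _)
      _ ≤ n * σ := by rw [← mul_sum]; exact Nat.mul_le_mul_left n hdeg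
  have hsplit : #W + #Wᶜ = n := card_add_card_compl W
  nlinarith

theorem exists_edges_meeting_few (hσ : ∑ i, #(𝒱 i) ≤ σ) :
    ∃ A : Finset (Sym2 V), Fintype.card V * (Fintype.card V - 2) ≤ 8 * #A ∧
      ∀ e ∈ A, ¬ e.IsDiag ∧ Fintype.card V * #(indicesMeeting 𝒱 e) ≤ 4 * σ := by
  classical
  obtain ⟨W, hW, hWdeg⟩ := exists_low_degree_half 𝒱 hσ
  refine ⟨W.offDiag.image Sym2.mk.uncurry, ?_, ?_⟩
  · have h2 := Sym2.two_mul_card_image_offDiag W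
    rw [offDiag_card] at h2
    have hsq : #W ≤ #W * #W := Nat.le_mul_self _
    set n := Fintype.card V
    rcases le_or_gt n 2 with hn | hn
    · simp [Nat.sub_eq_zero_of_le hn]
    zify [hsq, hn.le] at h2 ⊢
    nlinarith
  · simp only [mem_image, mem_offDiag, Prod.exists, Function.uncurry_apply_pair]
    rintro _ ⟨u, v, ⟨hu, hv, huv⟩, rfl⟩
    refine ⟨by simpa using huv, ?_⟩
    have hsub : indicesMeeting 𝒱 s(u, v) ⊆
        univ.filter (fun i => u ∈ 𝒱 i) ∪ univ.filter (fun i => v ∈ 𝒱 i) := by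
      intro i
      simp only [indicesMeeting, mem_filter, mem_univ, true_and, mem_union, Sym2.mem_iff]
      rintro ⟨w, hw, rfl | rfl⟩ <;> simp [hw]
    have := (card_le_card hsub).trans (card_union_le _ _)
    nlinarith [hWdeg u hu, hWdeg v hv]

end LowDegree

theorem cast_choose_succ_mul {a j : ℕ} (h : j ≤ a) :
    (a.choose (j + 1) : ℝ) * (j + 1) = a.choose j * (a - j) := by
  have := congrArg (Nat.cast (R := ℝ)) (Nat.choose_succ_right_eq a j)
  push_cast [Nat.cast_sub h] at this
  exact this

theorem choose_mul_one_sub_pow_le {m d j : ℕ} {x : ℝ} (hx0 : 0 ≤ x) (hx1 : x ≤ 1)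
    (hdj : d + j ≤ m) (hd : (d : ℝ) ≤ x * (m - j + 1)) :
    (m.choose j : ℝ) * (1 - x) ^ j ≤ (m - d).choose j := by
  induction j with
  | zero => simp
  | succ j ih =>
    push_cast at hd
    have hjm : (j : ℝ) + 1 ≤ m := by exact_mod_cast (by omega : j + 1 ≤ m)
    have ih := ih (by omega) (hd.trans (by nlinarith))
    have hfactor : ((m : ℝ) - j) * (1 - x) ≤ ((m - d : ℕ) : ℝ) - j := by
      push_cast [Nat.cast_sub (by omega : d ≤ m)]
      nlinarith
    have hpos : (0 : ℝ) < j + 1 := by positivity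
    refine le_of_mul_le_mul_right ?_ hpos
    rw [cast_choose_succ_mul (by omega), pow_succ]
    calc (m.choose (j + 1) : ℝ) * ((1 - x) ^ j * (1 - x)) * (j + 1)
        = (m.choose (j + 1) * (j + 1)) * (1 - x) ^ j * (1 - x) := by ring
      _ = (m.choose j * (1 - x) ^ j) * ((m - j) * (1 - x)) := by
          rw [cast_choose_succ_mul (by omega)]; ring
      _ ≤ (m - d).choose j * (((m - d : ℕ) : ℝ) - j) :=
          mul_le_mul ih hfactor (by nlinarith) (by positivity)

theorem exp_neg_two_mul_le_one_sub {y : ℝ} (hy0 : 0 ≤ y) (hy1 : y ≤ 3 / 4) :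
    Real.exp (-(2 * y)) ≤ 1 - y := by
  have hexp : Real.exp (-(3 / 2)) ≤ 1 / 4 := by
    have := Real.sum_le_exp_of_nonneg (show (0 : ℝ) ≤ 3 / 2 by norm_num) 4
    norm_num [Finset.sum_range_succ, Nat.factorial] at this
    rw [Real.exp_neg, inv_le_comm₀ (Real.exp_pos _) (by norm_num)]
    linarith
  have hchord := convexOn_exp.2 (Set.mem_univ (-(3 / 2))) (Set.mem_univ 0)
    (by linarith : 0 ≤ 4 / 3 * y) (by linarith : 0 ≤ 1 - 4 / 3 * y) (by ring)
  simp only [smul_eq_mul, mul_zero, add_zero, Real.exp_zero, mul_one] at hchord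
  calc Real.exp (-(2 * y)) = Real.exp (4 / 3 * y * -(3 / 2)) := by ring_nf
    _ ≤ 4 / 3 * y * Real.exp (-(3 / 2)) + (1 - 4 / 3 * y) := hchord
    _ ≤ 1 - y := by nlinarith

theorem log_le_div_three {x : ℝ} (hx : 7 ≤ x) : Real.log x ≤ x / 3 := by
  have hlog7 : Real.log 7 ≤ 2 := by
    rw [Real.log_le_iff_le_exp (by norm_num)]
    nlinarith [Real.exp_one_gt_d9, show Real.exp 2 = Real.exp 1 * Real.exp 1 by
      rw [← Real.exp_add]; norm_num]
  have hsplit : Real.log x = Real.log 7 + Real.log (x / 7) := by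
    rw [← Real.log_mul (by norm_num) (by positivity)]
    congr 1
    field_simp
  have := Real.log_le_sub_one_of_pos (show 0 < x / 7 by positivity)
  linarith

theorem choose_mul_exp_le_choose_sub {k d : ℕ} {Λ : ℝ} (hk : 7 ≤ k) (hΛ : Λ < 7 * k / 3 + 2)
    (hd : 11 * (d : ℝ) ≤ 16 * Λ) :
    ((6 * k).choose k : ℝ) * Real.exp (-(3 / 5 * Λ)) ≤ (6 * k - d).choose k := by
  have hk' : (7 : ℝ) ≤ k := by exact_mod_cast hk
  -- `x ≤ 3 / 4` is where `k ≥ 7` is needed; then `(1 - x) ^ k ≥ exp (-2 k x) ≥ exp (-2 d / 5)`.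
  set x := (d : ℝ) / (5 * k + 1)
  have hx0 : 0 ≤ x := by positivity
  have hdx : (d : ℝ) = x * (5 * k + 1) := by simp only [x]; field_simp
  have hx1 : x ≤ 3 / 4 := by
    rw [div_le_iff₀ (by positivity)]
    nlinarith
  have hdk : d + k ≤ 6 * k := by
    have : (d : ℝ) < 5 * k := by nlinarith
    have : d < 5 * k := by exact_mod_cast this
    omega
  have hchoose := choose_mul_one_sub_pow_le (m := 6 * k) (j := k) hx0 (by linarith) hdk
    (by push_cast; linarith)
  refine le_trans ?_ hchoose
  gcongr
  calc Real.exp (-(3 / 5 * Λ)) ≤ Real.exp (-(2 * x)) ^ k := by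
        rw [← Real.exp_nat_mul, Real.exp_le_exp]
        have : (k : ℝ) * x ≤ d / 5 := by
          rw [hdx]
          nlinarith
        nlinarith
    _ ≤ (1 - x) ^ k := by gcongr; exact exp_neg_two_mul_le_one_sub hx0 hx1

theorem pow_mul_one_sub_pow_lt_one {x q : ℝ} {a N : ℕ} (hx : 0 < x) (hq1 : q ≤ 1)
    (h : a * Real.log x < q * N) : x ^ a * (1 - q) ^ N < 1 := by
  calc x ^ a * (1 - q) ^ N ≤ Real.exp (Real.log x) ^ a * Real.exp (-q) ^ N := by
        rw [Real.exp_log hx]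
        gcongr
        exact Real.one_sub_le_exp_neg q
    _ = Real.exp (a * Real.log x - q * N) := by
        rw [← Real.exp_nat_mul, ← Real.exp_nat_mul, ← Real.exp_add]; ring_nf
    _ < 1 := Real.exp_lt_one_iff.mpr (by linarith)

theorem cubic_lt_exp {Λ : ℝ} (hΛ : 17 ≤ Λ) : 12 * Λ ^ 2 * (Λ + 1) < 121 * Real.exp (2 / 5 * Λ) := by
  set t := Λ - 17
  have ht : 0 ≤ t := by linarith
  have hE : 600 ≤ Real.exp (34 / 5) := by
    have h6 : Real.exp (34 / 5) = Real.exp 1 ^ 6 * Real.exp (4 / 5) := by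
      rw [← Real.exp_nat_mul, ← Real.exp_add]; norm_num
    have h1 : (2.718 : ℝ) ^ 6 ≤ Real.exp 1 ^ 6 := by gcongr; linarith [Real.exp_one_gt_d9]
    rw [h6]
    nlinarith [Real.add_one_le_exp (4 / 5 : ℝ), pow_pos (Real.exp_pos 1) 6]
  have hcubic := Real.sum_le_exp_of_nonneg (show 0 ≤ 2 / 5 * t by positivity) 4
  norm_num [Finset.sum_range_succ, Nat.factorial] at hcubic
  have hsplit : Real.exp (2 / 5 * Λ) = Real.exp (34 / 5) * Real.exp (2 / 5 * t) := by
    rw [← Real.exp_add]; congr 1; simp only [t]; ring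
  rw [hsplit, show Λ = t + 17 by ring]
  nlinarith [mul_le_mul hE hcubic (by positivity) (by positivity), pow_nonneg ht 3, sq_nonneg t]

theorem twelve_mul_log_lt {R : ℝ} {n : ℕ} (hR : 0 < R) (hΛ : 17 < Real.log R)
    (hn_lb : 33 * R / Real.log R ≤ n) (hn_ub : n ≤ 34 * R / Real.log R) :
    12 * R * Real.log (n + 1) < Real.exp (-(3 / 5 * Real.log R)) * (n * (n - 2) / 8 : ℕ) := by
  set Λ := Real.log R
  have hΛ0 : 0 < Λ := by linarith
  have hΛR : Λ ≤ R - 1 := Real.log_le_sub_one_of_pos hR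
  have hn33 : 33 ≤ (n : ℝ) := le_trans (by rw [le_div_iff₀ hΛ0]; nlinarith) hn_lb
  have hlog : Real.log (n + 1) ≤ Λ + 1 := by
    have h2R : (n : ℝ) ≤ 2 * R := hn_ub.trans (by rw [div_le_iff₀ hΛ0]; nlinarith)
    calc Real.log (n + 1) ≤ Real.log (Real.exp 1 * R) :=
          Real.log_le_log (by positivity) (by nlinarith [Real.exp_one_gt_d9])
      _ = Λ + 1 := by rw [Real.log_mul (Real.exp_pos 1).ne' hR.ne', Real.log_exp]; ring
  have hN : (n : ℝ) ^ 2 / 9 ≤ (n * (n - 2) / 8 : ℕ) := by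
    have hdiv : n * (n - 2) < n * (n - 2) / 8 * 8 + 8 := Nat.lt_div_mul_add (by norm_num)
    have : ((n * (n - 2) : ℕ) : ℝ) + 1 ≤ (n * (n - 2) / 8 : ℕ) * 8 + 8 := by exact_mod_cast hdiv
    push_cast [Nat.cast_sub (show 2 ≤ n by exact_mod_cast (by linarith : (2 : ℝ) ≤ n))] at this
    nlinarith
  have hexp : R * Real.exp (-(3 / 5 * Λ)) = Real.exp (2 / 5 * Λ) := by
    rw [show R = Real.exp Λ from (Real.exp_log hR).symm, ← Real.exp_add]; ring_nf
  have hsq : (33 * R / Λ) ^ 2 ≤ n ^ 2 := by gcongr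
  have hcubic := cubic_lt_exp hΛ.le
  calc 12 * R * Real.log (n + 1) ≤ 12 * R * (Λ + 1) := by gcongr
    _ < R * (121 * Real.exp (2 / 5 * Λ)) / Λ ^ 2 := by
        rw [lt_div_iff₀ (by positivity)]; nlinarith
    _ = Real.exp (-(3 / 5 * Λ)) * ((33 * R / Λ) ^ 2 / 9) := by
        rw [← hexp]; field_simp; ring
    _ ≤ Real.exp (-(3 / 5 * Λ)) * (n * (n - 2) / 8 : ℕ) :=
        mul_le_mul_of_nonneg_left (by linarith) (Real.exp_pos _).le

theorem hasForcingLists_matchingGraph_of_pow_lt_one {r k m n : ℕ} {q : ℝ} (hkm : k ≤ m)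
    (hq0 : 0 ≤ q) (hq1 : q ≤ 1)
    (hq : ∀ d : ℕ, n * d ≤ 4 * (m * (2 * (r - 1))) → (m.choose k : ℝ) * q ≤ (m - d).choose k)
    (h : ((n : ℝ) + 1) ^ (m * (2 * (r - 1))) * (1 - q) ^ (n * (n - 2) / 8) < 1) :
    HasForcingLists (matchingGraph r) k n := by
  set σ := m * (2 * (r - 1))
  let 𝓕 := Fintype.piFinset fun _ : Fin m => univ.filter fun V : Finset (Fin n) =>
    #V ≤ 2 * (r - 1)
  have h𝓕 : #𝓕 ≤ (n + 1) ^ σ :=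
    calc #𝓕 = #(univ.filter fun V : Finset (Fin n) => #V ≤ 2 * (r - 1)) ^ m := by simp [𝓕]
      _ ≤ ((n + 1) ^ (2 * (r - 1))) ^ m :=
          Nat.pow_le_pow_left (by simpa using card_finset_card_le_le_pow (Fin n) (2 * (r - 1))) _
      _ = (n + 1) ^ σ := by rw [← pow_mul, mul_comm]
  have hσ (𝒱) (h𝒱 : 𝒱 ∈ 𝓕) : ∑ i, #(𝒱 i) ≤ σ :=
    (sum_le_sum fun i _ => by simpa using Fintype.mem_piFinset.mp h𝒱 i).trans_eq (by simp [σ])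
  choose! A hA_card hA using fun 𝒱 h𝒱 => exists_edges_meeting_few 𝒱 (hσ 𝒱 h𝒱)
  obtain ⟨L, hL, hLA⟩ := exists_lists_disjoint (N := n * (n - 2) / 8) 𝓕 A indicesMeeting
    hkm hq0 hq1 (fun 𝒱 h𝒱 => Nat.div_le_of_le_mul (by simpa using hA_card 𝒱 h𝒱))
    (fun 𝒱 h𝒱 e he => hq _ (by simpa using (hA 𝒱 h𝒱 e he).2))
    (lt_of_le_of_lt (mul_le_mul_of_nonneg_right (by exact_mod_cast h𝓕)
      (pow_nonneg (sub_nonneg.mpr hq1) _)) h)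
  refine hasForcingLists_matchingGraph_of_uncovered L (fun e _ => hL e) fun 𝒱 h𝒱 => ?_
  have h𝒱𝓕 : 𝒱 ∈ 𝓕 := Fintype.mem_piFinset.mpr fun i => by simpa using h𝒱 i
  obtain ⟨e, he, hdisj⟩ := hLA 𝒱 h𝒱𝓕
  refine ⟨e, (hA 𝒱 h𝒱𝓕 e he).1, fun i hi v hv hve => ?_⟩
  exact disjoint_left.mp hdisj hi (by simpa [indicesMeeting] using ⟨v, hv, hve⟩)

theorem hasForcingLists_matchingGraph_floor {r k : ℕ} (hr : 2 ≤ r) (hk : 7 ≤ k)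
    (hΛ : 17 < Real.log (r * k)) (hΛk : Real.log (r * k) < 7 * k / 3 + 2) :
    HasForcingLists (matchingGraph r) k ⌊34 * (r * k) / Real.log (r * k)⌋₊ := by
  set R : ℝ := r * k
  set Λ := Real.log R
  set n := ⌊34 * R / Λ⌋₊
  have hR : 0 < R := by positivity
  have hΛ0 : 0 < Λ := by linarith
  have hn_ub : (n : ℝ) ≤ 34 * R / Λ := Nat.floor_le (by positivity)
  have hn_lb : 33 * R / Λ ≤ n := by
    have hRΛ : 1 ≤ R / Λ := by rw [le_div_iff₀ hΛ0]; linarith [Real.log_le_sub_one_of_pos hR]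
    have h34 : 34 * R / Λ - 1 < n := Nat.sub_one_lt_floor _
    rw [mul_div_assoc] at h34 ⊢
    linarith
  have hσ : ((6 * k * (2 * (r - 1)) : ℕ) : ℝ) ≤ 12 * R := by
    simp only [R]; push_cast [Nat.cast_sub (by omega : 1 ≤ r)]; nlinarith
  have hq1 : Real.exp (-(3 / 5 * Λ)) ≤ 1 := Real.exp_le_one_iff.mpr (by linarith)
  refine hasForcingLists_matchingGraph_of_pow_lt_one (m := 6 * k) (by omega) (Real.exp_pos _).le
    hq1 (fun d hd => choose_mul_exp_le_choose_sub hk hΛk ?_) ?_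
  · have hd' : (n : ℝ) * d ≤ 4 * (6 * k * (2 * (r - 1)) : ℕ) := by exact_mod_cast hd
    have hnΛ : 33 * R ≤ n * Λ := (div_le_iff₀ hΛ0).mp hn_lb
    nlinarith
  refine pow_mul_one_sub_pow_lt_one (by positivity) hq1 ?_
  calc ((6 * k * (2 * (r - 1)) : ℕ) : ℝ) * Real.log (n + 1) ≤ 12 * R * Real.log (n + 1) := by
        gcongr; exact Real.log_nonneg (by linarith [n.cast_nonneg (α := ℝ)])
    _ < _ := twelve_mul_log_lt hR hΛ hn_lb hn_ub

theorem le_listRamsey_matchingGraph {r k : ℕ} (hr : 2 ≤ r) (hk : 1 ≤ k) :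
    (r : ℝ) * k / (4 * Real.log (r * k)) ≤ listRamsey (matchingGraph r) k := by
  set n := listRamsey (matchingGraph r) k
  have hforce := (hasForcingLists_matchingGraph_two_mul r k).listRamsey
  by_contra! hlt
  refine not_hasForcingLists_matchingGraph ?_ hforce
  have hr' : (2 : ℝ) ≤ r := by exact_mod_cast hr
  have hk' : (1 : ℝ) ≤ k := by exact_mod_cast hk
  have hΛ : 1 / 2 ≤ Real.log (r * k) :=
    calc (1 / 2 : ℝ) ≤ Real.log 2 := by linarith [Real.log_two_gt_d9]
      _ ≤ Real.log (r * k) := Real.log_le_log (by norm_num) (by nlinarith)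
  have hnΛ : n * (4 * Real.log (r * k)) < r * k := (lt_div_iff₀ (by positivity)).mp hlt
  have hlog : (n : ℝ) * Real.log n ≤ n * Real.log (r * k) := by
    rcases n.eq_zero_or_pos with hn | hn
    · simp [hn]
    gcongr
    nlinarith
  push_cast [Nat.cast_sub (by omega : 1 ≤ r)]
  nlinarith

theorem listRamsey_matchingGraph_le {r k : ℕ} (hr : 2 ≤ r) (hk : 1 ≤ k)
    (hrk : Real.log r < 2 * (k + 1)) :
    (listRamsey (matchingGraph r) k : ℝ) ≤ 34 * (r * k) / Real.log (r * k) := by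
  have hr' : (2 : ℝ) ≤ r := by exact_mod_cast hr
  have hk' : (1 : ℝ) ≤ k := by exact_mod_cast hk
  have hlog_mul : Real.log (r * k) = Real.log r + Real.log k :=
    Real.log_mul (by positivity) (by positivity)
  have hΛ0 : 0 < Real.log (r * k) := Real.log_pos (by nlinarith)
  by_cases hΛ : Real.log (r * k) ≤ 17
  · have := listRamsey_le (hasForcingLists_matchingGraph_two_mul r k)
    calc (listRamsey (matchingGraph r) k : ℝ) ≤ (2 * (r - 1) * k + 2 : ℕ) := by exact_mod_cast this
      _ ≤ 34 * (r * k) / 17 := by push_cast [Nat.cast_sub (by omega : 1 ≤ r)]; nlinarith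
      _ ≤ 34 * (r * k) / Real.log (r * k) := by gcongr
  rw [not_le] at hΛ
  have hk7 : 7 ≤ k := by
    by_contra! hk7
    have hk6 : (k : ℝ) ≤ 6 := by exact_mod_cast (by omega : k ≤ 6)
    have hlog6 : Real.log k ≤ 2 := by
      rw [Real.log_le_iff_le_exp (by positivity)]
      nlinarith [Real.exp_one_gt_d9, show Real.exp 2 = Real.exp 1 * Real.exp 1 by
        rw [← Real.exp_add]; norm_num]
    linarith
  have hΛk : Real.log (r * k) < 7 * k / 3 + 2 := by
    linarith [log_le_div_three (show (7 : ℝ) ≤ k by exact_mod_cast hk7)]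
  calc (listRamsey (matchingGraph r) k : ℝ) ≤ ⌊34 * (r * k) / Real.log (r * k)⌋₊ := by
        exact_mod_cast listRamsey_le (hasForcingLists_matchingGraph_floor hr hk7 hΛ hΛk)
    _ ≤ 34 * (r * k) / Real.log (r * k) := Nat.floor_le (by positivity)

theorem list_ramsey_matching_many_colours_general (r k : ℕ) (hk : 0 < k)
    (h0 : 0 < Real.log r) (h1 : Real.log r < 2 * ((k : ℝ) + 1)) :
    (r : ℝ) * k / (4 * Real.log ((r : ℝ) * k)) ≤ (listRamsey (matchingGraph r) k : ℝ) ∧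
    (listRamsey (matchingGraph r) k : ℝ) ≤ 34 * (r : ℝ) * k / Real.log ((r : ℝ) * k) := by
  have hr : 2 ≤ r := by
    by_contra! hr
    interval_cases r <;> simp at h0
  rw [mul_assoc 34]
  exact ⟨le_listRamsey_matchingGraph hr hk, listRamsey_matchingGraph_le hr hk h1⟩

theorem list_ramsey_matching_many_colours (r k : ℕ) (hr : 0 < r) (hk : 0 < k)
    (h0 : 0 < Real.log r) (h1 : Real.log r < 2 * ((k : ℝ) + 1)) :
    (r : ℝ) * k / (4 * Real.log ((r : ℝ) * k)) ≤ (listRamsey (matchingGraph r) k : ℝ) ∧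
    (listRamsey (matchingGraph r) k : ℝ) ≤ 34 * (r : ℝ) * k / Real.log ((r : ℝ) * k) :=
  list_ramsey_matching_many_colours_general r k hk h0 h1
end

section
/- Let r and k be positive integers with rk > 1. Then R_ℓ(rK_2, k) ≥ max(2r, (r-1)k/(2·log(rk))). -/
open Finset

set_option maxHeartbeats 1000000 in

lemma key_real (r k n : ℕ) (hr : 2 ≤ r) (hk : 1 ≤ k) (hn : 4 ≤ n)
    (hlt : (n:ℝ) < ((r:ℝ)-1)*k/(2*Real.log ((r:ℝ)*k))) :
    n*n*(n-2)^((r-1)*k) < n^((r-1)*k) := by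
  have hrk2 : (2:ℝ) ≤ (r:ℝ)*k := by
    have : (2:ℕ) ≤ r*k := le_trans hr (Nat.le_mul_of_pos_right r hk)
    exact_mod_cast this
  set R : ℝ := (r:ℝ)*k with hR
  have hlogR : 0 < Real.log R := Real.log_pos (by linarith)
  have hlog2 : (1:ℝ)/2 < Real.log 2 := by
    have := Real.log_two_gt_d9; linarith
  have hlogR2 : (1:ℝ)/2 < Real.log R := lt_of_lt_of_le hlog2 (Real.log_le_log (by norm_num) hrk2)
  set a : ℝ := (n:ℝ) with ha
  have ha4 : (4:ℝ) ≤ a := by rw [ha]; exact_mod_cast hn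
  have ha0 : 0 < a := by linarith
  set m : ℕ := (r-1)*k with hm
  have hM : (m:ℝ) = ((r:ℝ)-1)*k := by
    rw [hm]; push_cast [Nat.cast_sub (by omega : 1 ≤ r)]; ring
  have hm1 : 1 ≤ m := by rw [hm]; exact Nat.one_le_iff_ne_zero.mpr (Nat.mul_ne_zero (by omega) (by omega))
  have hMR : (m:ℝ) ≤ R := by
    rw [hM, hR]
    have hk0 : (0:ℝ) ≤ k := Nat.cast_nonneg k
    nlinarith
  have hkey : 2 * a * Real.log R < m := by
    have h := hlt; rw [← hM] at h
    have := (lt_div_iff₀ (by positivity : (0:ℝ) < 2*Real.log R)).mp h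
    linarith
  have haR : a < R := by
    have h1 : a < (m:ℝ)/(2*Real.log R) := by
      rw [hM]; exact hlt
    have h2 : (m:ℝ)/(2*Real.log R) ≤ m := by
      apply div_le_self (by positivity) (by linarith)
    linarith
  -- main exponential estimates
  have h1 : (0:ℝ) ≤ 1 - 2/a := by
    have : 2/a ≤ 2/4 := by apply div_le_div_of_nonneg_left <;> linarith
    linarith
  have h2 : (1 - 2/a)^m ≤ Real.exp (-(2/a)*m) := by
    calc (1 - 2/a)^m ≤ (Real.exp (-(2/a)))^m := by
          apply pow_le_pow_left₀ h1
          have := Real.add_one_le_exp (-(2/a)); linarith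
      _ = Real.exp (-(2/a)*m) := by rw [← Real.exp_nat_mul]; ring_nf
  have h4 : a * a < Real.exp ((2/a)*m) := by
    have hex : Real.exp (4 * Real.log R) = R^4 := by
      rw [show (4:ℝ)*Real.log R = ((4:ℕ):ℝ)*Real.log R by norm_num,
        Real.exp_nat_mul, Real.exp_log (by linarith)]
    have hlt4 : 4 * Real.log R < (2/a)*m := by
      rw [div_mul_eq_mul_div, lt_div_iff₀ ha0]
      nlinarith
    have : R^4 < Real.exp ((2/a)*m) := by
      rw [← hex]; exact Real.exp_lt_exp.mpr hlt4
    have hA : a*a < R*R := mul_self_lt_mul_self (by linarith) haR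
    have h1R : (1:ℝ) ≤ R*R := by nlinarith
    have hB : R*R ≤ R^4 := by nlinarith [mul_le_mul_of_nonneg_left h1R (show (0:ℝ) ≤ R*R by positivity)]
    linarith
  have hmain : a*a*(1-2/a)^m < 1 := by
    have := mul_le_mul_of_nonneg_left h2 (by positivity : (0:ℝ) ≤ a*a)
    have hlt1 : a*a*Real.exp (-(2/a)*m) < 1 := by
      rw [neg_mul, Real.exp_neg]
      rw [mul_inv_lt_iff₀ (Real.exp_pos _), one_mul]
      exact h4
    linarith
  -- conclude
  have hcast : ((n-2:ℕ):ℝ) = a - 2 := by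
    rw [ha]; push_cast [Nat.cast_sub (by omega : 2 ≤ n)]; ring
  have hfin : a*a*(a-2)^m < a^m := by
    have hsplit : (a-2)^m = (1-2/a)^m * a^m := by
      rw [← mul_pow]
      congr 1
      field_simp
    rw [hsplit]
    calc a*a*((1-2/a)^m * a^m) = (a*a*(1-2/a)^m) * a^m := by ring
      _ < 1 * a^m := by
          apply mul_lt_mul_of_pos_right hmain (by positivity)
      _ = a^m := one_mul _
  have : ((n*n*(n-2)^m : ℕ):ℝ) < ((n^m : ℕ):ℝ) := by
    push_cast [Nat.cast_sub (show 2 ≤ n by omega)]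
    exact hfin
  exact_mod_cast this


set_option maxHeartbeats 1600000 in
lemma ramseySet_nonempty (r k : ℕ) (hr : 0 < r) (hk : 0 < k) :
    { n : ℕ | ∃ L : Sym2 (Fin n) → Finset ℕ,
      (∀ e : Sym2 (Fin n), ¬ e.IsDiag → (L e).card = k) ∧
      ∀ c : Sym2 (Fin n) → ℕ, (∀ e : Sym2 (Fin n), ¬ e.IsDiag → c e ∈ L e) →
        HasMonoCopy (matchingGraph r) c }.Nonempty := by
  set N := k*(r-1)+1 with hN
  refine ⟨2*N, fun _ => Finset.range k, fun e _ => Finset.card_range k, ?_⟩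
  intro c hc
  -- the fixed matching
  set v : Fin N → Fin (2*N) := fun i => ⟨2*(i:ℕ), by omega⟩ with hv
  set w : Fin N → Fin (2*N) := fun i => ⟨2*(i:ℕ)+1, by omega⟩ with hw
  have hnd : ∀ i : Fin N, ¬ (s(v i, w i)).IsDiag := by
    intro i h
    rw [Sym2.mk_isDiag_iff] at h
    have := congrArg Fin.val h
    simp [hv, hw] at this
  set g : Fin N → ℕ := fun i => c s(v i, w i) with hg
  have hmaps : ∀ i ∈ (univ : Finset (Fin N)), g i ∈ Finset.range k := fun i _ => hc _ (hnd i)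
  have hcard : (Finset.range k).card * (r-1) < (univ : Finset (Fin N)).card := by
    simp only [Finset.card_range, Finset.card_univ, Fintype.card_fin]
    omega
  obtain ⟨y, -, hy⟩ := Finset.exists_lt_card_fiber_of_mul_lt_card_of_maps_to hmaps hcard
  obtain ⟨S, hSsub, hScard⟩ := Finset.exists_subset_card_eq (show r ≤ (univ.filter (fun i => g i = y)).card by omega)
  set mE := S.orderEmbOfFin hScard with hmE
  have hmem : ∀ i : Fin r, g (mE i) = y := by
    intro i
    have := hSsub (S.orderEmbOfFin_mem hScard i)
    exact (Finset.mem_filter.mp this).2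
  -- the embedding of the matching
  set f : Fin (2*r) → Fin (2*N) := fun a =>
    ⟨2*((mE ⟨(a:ℕ)/2, by omega⟩ : Fin N):ℕ) + (a:ℕ)%2, by
      have := (mE ⟨(a:ℕ)/2, by omega⟩).isLt; omega⟩ with hf
  refine ⟨f, y, ?_, ?_⟩
  · intro a b hab
    have h := congrArg Fin.val hab
    simp only [hf] at h
    set p := ((mE ⟨(a:ℕ)/2, by omega⟩ : Fin N):ℕ) with hp
    set q := ((mE ⟨(b:ℕ)/2, by omega⟩ : Fin N):ℕ) with hq
    have hpq : p = q ∧ (a:ℕ)%2 = (b:ℕ)%2 := by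
      constructor <;> omega
    have h2 : (⟨(a:ℕ)/2, by omega⟩ : Fin r) = ⟨(b:ℕ)/2, by omega⟩ := by
      apply mE.injective
      apply Fin.ext
      exact hpq.1
    have h3 : (a:ℕ)/2 = (b:ℕ)/2 := congrArg Fin.val h2
    apply Fin.ext
    omega
  · intro a b hab
    rw [matchingGraph, SimpleGraph.fromRel_adj] at hab
    obtain ⟨hne, hrel⟩ := hab
    -- symmetric handling
    have main : ∀ a b : Fin (2*r), (b:ℕ) = (a:ℕ)+1 → (a:ℕ)%2 = 0 → c s(f a, f b) = y := by
      intro a b h1 h2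
      have hfa : f a = v (mE ⟨(a:ℕ)/2, by omega⟩) := by
        apply Fin.ext
        simp only [hf, hv]
        omega
      have hidx : (⟨(b:ℕ)/2, by omega⟩ : Fin r) = ⟨(a:ℕ)/2, by omega⟩ := by
        apply Fin.ext; show (b:ℕ)/2 = (a:ℕ)/2; omega
      have hfb : f b = w (mE ⟨(a:ℕ)/2, by omega⟩) := by
        apply Fin.ext
        simp only [hf, hw, hidx]
        omega
      rw [hfa, hfb]
      exact hmem _
    rcases hrel with ⟨h1, h2⟩ | ⟨h1, h2⟩
    · exact main a b h1 h2
    · rw [Sym2.eq_swap]; exact main b a h1 h2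


lemma lemA {r k n : ℕ} (hk : 0 < k) (L : Sym2 (Fin n) → Finset ℕ)
    (hL : ∀ e : Sym2 (Fin n), ¬ e.IsDiag → (L e).card = k)
    (hforce : ∀ c : Sym2 (Fin n) → ℕ, (∀ e : Sym2 (Fin n), ¬ e.IsDiag → c e ∈ L e) →
      HasMonoCopy (matchingGraph r) c) : 2*r ≤ n := by
  classical
  set c : Sym2 (Fin n) → ℕ := fun e => if h : (L e).Nonempty then h.choose else 0 with hcdef
  have hc : ∀ e : Sym2 (Fin n), ¬ e.IsDiag → c e ∈ L e := by
    intro e he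
    have hne : (L e).Nonempty := Finset.card_pos.mp (by rw [hL e he]; exact hk)
    rw [hcdef]
    simp only [dif_pos hne]
    exact hne.choose_spec
  obtain ⟨f, x, hf, -⟩ := hforce c hc
  simpa using Fintype.card_le_of_injective f hf
set_option maxHeartbeats 1600000 in
lemma lemB {r k n : ℕ} (hr : 2 ≤ r) (hk : 0 < k) (hn : 2*r ≤ n)
    (L : Sym2 (Fin n) → Finset ℕ)
    (hL : ∀ e : Sym2 (Fin n), ¬ e.IsDiag → (L e).card = k)
    (hforce : ∀ c : Sym2 (Fin n) → ℕ, (∀ e : Sym2 (Fin n), ¬ e.IsDiag → c e ∈ L e) →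
      HasMonoCopy (matchingGraph r) c) :
    ((r:ℝ)-1)*k/(2*Real.log ((r:ℝ)*k)) ≤ (n:ℝ) := by
  classical
  by_contra hlt
  push_neg at hlt
  have hn4 : 4 ≤ n := by omega
  have key := key_real r k n hr hk hn4 hlt
  set C : Finset ℕ := (univ.filter (fun e : Sym2 (Fin n) => ¬ e.IsDiag)).biUnion L with hC
  have hsub : ∀ e : Sym2 (Fin n), ¬ e.IsDiag → L e ⊆ C := by
    intro e he
    exact subset_biUnion_of_mem L (mem_filter.mpr ⟨mem_univ _, he⟩)
  have hcompl : ∀ e : Sym2 (Fin n), ¬ e.IsDiag →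
      (univ.filter (fun v : Fin n => v ∉ e)).card = n - 2 := by
    intro e
    induction e using Sym2.ind with
    | _ a b =>
      intro he
      have hab : a ≠ b := fun h => he (by rw [Sym2.mk_isDiag_iff]; exact h)
      have h2 : (univ.filter (fun v : Fin n => v ∈ s(a,b))).card = 2 := by
        have : (univ.filter (fun v : Fin n => v ∈ s(a,b))) = {a, b} := by
          ext z; simp [Sym2.mem_iff]
        rw [this, Finset.card_insert_of_notMem (by simp [hab]), Finset.card_singleton]
      have := Finset.card_filter_add_card_filter_not
        (s := (univ : Finset (Fin n))) (p := (fun v : Fin n => v ∈ s(a,b)))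
      simp only [Finset.card_univ, Fintype.card_fin] at this
      omega
  have hkcard : ∀ e : Sym2 (Fin n), ¬ e.IsDiag →
      (univ.filter (fun x : {x // x ∈ C} => (↑x:ℕ) ∈ L e)).card = k := by
    intro e he
    rw [← hL e he]
    exact Finset.card_bij (fun x _ => (↑x : ℕ)) (fun x hx => (mem_filter.mp hx).2)
      (fun x _ y _ hxy => Subtype.ext hxy)
      (fun y hy => ⟨⟨y, hsub e he hy⟩, mem_filter.mpr ⟨mem_univ _, hy⟩, rfl⟩)
  have hkC : k ≤ C.card := by
    have hnd0 : ¬ (s((⟨0, by omega⟩ : Fin n), (⟨1, by omega⟩ : Fin n))).IsDiag := by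
      rw [Sym2.mk_isDiag_iff]
      intro h; have := congrArg Fin.val h; simp at this
    have := hkcard _ hnd0
    calc k = _ := this.symm
      _ ≤ (univ : Finset {x // x ∈ C}).card := Finset.card_filter_le _ _
      _ = C.card := by rw [Finset.card_univ, Fintype.card_coe]
  have hex : ∃ t : {x // x ∈ C} → Fin (r-1) → Fin n,
      ∀ e : Sym2 (Fin n), ¬ e.IsDiag → ∃ x : {x // x ∈ C}, ↑x ∈ L e ∧ ∃ j, t x j ∈ e := by
    by_contra hno
    push_neg at hno
    set Bad : Sym2 (Fin n) → Finset ({x // x ∈ C} → Fin (r-1) → Fin n) := fun e =>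
      univ.filter (fun t => ∀ x : {x // x ∈ C}, (↑x:ℕ) ∈ L e → ∀ j, t x j ∉ e) with hBad
    have hcover : (univ : Finset ({x // x ∈ C} → Fin (r-1) → Fin n)) ⊆
        (univ.filter fun e : Sym2 (Fin n) => ¬ e.IsDiag).biUnion Bad := by
      intro t _
      obtain ⟨e, he, hbad⟩ := hno t
      exact mem_biUnion.mpr ⟨e, mem_filter.mpr ⟨mem_univ _, he⟩,
        mem_filter.mpr ⟨mem_univ _, hbad⟩⟩
    have hBadCard : ∀ e ∈ (univ.filter fun e : Sym2 (Fin n) => ¬ e.IsDiag),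
        (Bad e).card ≤ (n-2)^((r-1)*k) * (n^(r-1))^(C.card - k) := by
      intro e hemem
      have he : ¬ e.IsDiag := (mem_filter.mp hemem).2
      have hsubset : Bad e ⊆ Fintype.piFinset (fun x : {x // x ∈ C} =>
          if (↑x : ℕ) ∈ L e then
            Fintype.piFinset (fun _ : Fin (r-1) => univ.filter (fun v : Fin n => v ∉ e))
          else univ) := by
        intro t htmem
        rw [Fintype.mem_piFinset]
        intro x
        by_cases hx : (↑x:ℕ) ∈ L e
        · rw [if_pos hx, Fintype.mem_piFinset]
          intro j
          simp only [mem_filter, mem_univ, true_and]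
          exact (mem_filter.mp htmem).2 x hx j
        · rw [if_neg hx]; exact mem_univ _
      calc (Bad e).card ≤ _ := Finset.card_le_card hsubset
        _ = ∏ x : {x // x ∈ C}, (if (↑x : ℕ) ∈ L e then
              (Fintype.piFinset (fun _ : Fin (r-1) => univ.filter (fun v : Fin n => v ∉ e))).card
            else (univ : Finset (Fin (r-1) → Fin n)).card) := by
            rw [Fintype.card_piFinset]
            exact Finset.prod_congr rfl (fun x _ => apply_ite Finset.card _ _ _)
        _ = ((n-2)^(r-1))^k * ((n^(r-1)))^(C.card - k) := by
            rw [Finset.prod_ite _ _, Finset.prod_const, Finset.prod_const]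
            congr 1
            · congr 1
              · rw [Fintype.card_piFinset, hcompl e he, Finset.prod_const,
                  Finset.card_univ, Fintype.card_fin]
              · exact hkcard e he
            · congr 1
              · rw [Finset.card_univ, Fintype.card_fun, Fintype.card_fin, Fintype.card_fin]
              · have := Finset.card_filter_add_card_filter_not
                  (s := (univ : Finset {x // x ∈ C})) (p := (fun x : {x // x ∈ C} => (↑x:ℕ) ∈ L e))
                rw [Finset.card_univ, Fintype.card_coe] at this
                rw [hkcard e he] at this
                omega
        _ = (n-2)^((r-1)*k) * (n^(r-1))^(C.card - k) := by rw [← pow_mul]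
    have hedges : (univ.filter fun e : Sym2 (Fin n) => ¬ e.IsDiag).card ≤ n*n := by
      calc (univ.filter fun e : Sym2 (Fin n) => ¬ e.IsDiag).card
          ≤ (univ : Finset (Sym2 (Fin n))).card := Finset.card_filter_le _ _
        _ = (Fintype.card (Fin n) + 1).choose 2 := by rw [Finset.card_univ, Sym2.card]
        _ = (n+1)*n/2 := by
            rw [Fintype.card_fin, Nat.choose_two_right]
            simp
        _ ≤ n*n := Nat.div_le_of_le_mul (by nlinarith)
    have htotal : (univ : Finset ({x // x ∈ C} → Fin (r-1) → Fin n)).card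
        = (n^(r-1))^k * (n^(r-1))^(C.card - k) := by
      rw [Finset.card_univ, Fintype.card_fun, Fintype.card_fun, Fintype.card_fin,
        Fintype.card_fin, Fintype.card_coe, ← pow_add]
      congr 1
      omega
    have hchain : (univ : Finset ({x // x ∈ C} → Fin (r-1) → Fin n)).card
        ≤ (n*n) * ((n-2)^((r-1)*k) * (n^(r-1))^(C.card - k)) := by
      calc (univ : Finset ({x // x ∈ C} → Fin (r-1) → Fin n)).card
          ≤ ((univ.filter fun e : Sym2 (Fin n) => ¬ e.IsDiag).biUnion Bad).card :=
            Finset.card_le_card hcover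
        _ ≤ ∑ e ∈ (univ.filter fun e : Sym2 (Fin n) => ¬ e.IsDiag), (Bad e).card :=
            Finset.card_biUnion_le
        _ ≤ (univ.filter fun e : Sym2 (Fin n) => ¬ e.IsDiag).card
              • ((n-2)^((r-1)*k) * (n^(r-1))^(C.card - k)) :=
            Finset.sum_le_card_nsmul _ _ _ hBadCard
        _ ≤ (n*n) * ((n-2)^((r-1)*k) * (n^(r-1))^(C.card - k)) := by
            rw [smul_eq_mul]
            exact Nat.mul_le_mul_right _ hedges
    rw [htotal] at hchain
    have hQ : 0 < (n^(r-1))^(C.card - k) := by positivity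
    have : (n^(r-1))^k ≤ n*n*(n-2)^((r-1)*k) := by
      have h := hchain
      rw [show (n*n) * ((n-2)^((r-1)*k) * (n^(r-1))^(C.card - k))
          = (n*n*(n-2)^((r-1)*k)) * (n^(r-1))^(C.card - k) by ring] at h
      exact Nat.le_of_mul_le_mul_right h hQ
    rw [← pow_mul] at this
    omega
  obtain ⟨t, ht⟩ := hex
  -- build the colouring avoiding a monochromatic matching
  set c : Sym2 (Fin n) → ℕ := fun e =>
    if h : ∃ x : {x // x ∈ C}, ↑x ∈ L e ∧ ∃ j, t x j ∈ e then (↑h.choose : ℕ) else 0 with hcdef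
  have hc : ∀ e : Sym2 (Fin n), ¬ e.IsDiag → c e ∈ L e := by
    intro e he
    rw [hcdef]
    simp only [dif_pos (ht e he)]
    exact (ht e he).choose_spec.1
  obtain ⟨f, x, hfinj, hmono⟩ := hforce c hc
  set A : Fin r → Fin (2*r) := fun i => ⟨2*(i:ℕ), by omega⟩ with hA
  set B : Fin r → Fin (2*r) := fun i => ⟨2*(i:ℕ)+1, by omega⟩ with hB
  have hadj : ∀ i : Fin r, (matchingGraph r).Adj (A i) (B i) := by
    intro i
    rw [matchingGraph, SimpleGraph.fromRel_adj]
    refine ⟨?_, Or.inl ⟨rfl, by show 2*(i:ℕ) % 2 = 0; omega⟩⟩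
    intro h
    have h2 : 2*(i:ℕ) = 2*(i:ℕ)+1 := congrArg Fin.val h
    omega
  set e : Fin r → Sym2 (Fin n) := fun i => s(f (A i), f (B i)) with he
  have hnd : ∀ i : Fin r, ¬ (e i).IsDiag := by
    intro i h
    have h' : f (A i) = f (B i) := Sym2.mk_isDiag_iff.mp h
    have h2 : 2*(i:ℕ) = 2*(i:ℕ)+1 := congrArg Fin.val (hfinj h')
    omega
  have hP : ∀ i : Fin r, ∃ y : {x // x ∈ C}, ↑y ∈ L (e i) ∧ ∃ j, t y j ∈ e i :=
    fun i => ht (e i) (hnd i)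
  have hxi : ∀ i : Fin r, ((hP i).choose : ℕ) = x := by
    intro i
    have hce : c (e i) = ((hP i).choose : ℕ) := dif_pos (hP i)
    exact hce.symm.trans (hmono (A i) (B i) (hadj i))
  have hsame : ∀ i i' : Fin r, (hP i).choose = (hP i').choose := by
    intro i i'
    apply Subtype.ext
    rw [hxi i, hxi i']
  have hJ : ∀ i : Fin r, ∃ j, t (hP i).choose j ∈ e i := fun i => (hP i).choose_spec.2
  choose j hj using hJ
  have hjinj : Function.Injective j := by
    intro i i' hii'
    have hv1 : t (hP i).choose (j i) ∈ e i := hj i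
    have hv2 : t (hP i).choose (j i) ∈ e i' := by
      have h := hj i'
      rw [← hsame i i', ← hii'] at h
      exact h
    have hv1' : t (hP i).choose (j i) = f (A i) ∨ t (hP i).choose (j i) = f (B i) :=
      Sym2.mem_iff.mp hv1
    have hv2' : t (hP i).choose (j i) = f (A i') ∨ t (hP i).choose (j i) = f (B i') :=
      Sym2.mem_iff.mp hv2
    apply Fin.ext
    rcases hv1' with h1 | h1 <;> rcases hv2' with h2 | h2
    · have h3 : 2*(i:ℕ) = 2*(i':ℕ) := congrArg Fin.val (hfinj (h1.symm.trans h2)); omega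
    · have h3 : 2*(i:ℕ) = 2*(i':ℕ)+1 := congrArg Fin.val (hfinj (h1.symm.trans h2)); omega
    · have h3 : 2*(i:ℕ)+1 = 2*(i':ℕ) := congrArg Fin.val (hfinj (h1.symm.trans h2)); omega
    · have h3 : 2*(i:ℕ)+1 = 2*(i':ℕ)+1 := congrArg Fin.val (hfinj (h1.symm.trans h2)); omega
  have hcard := Fintype.card_le_of_injective j hjinj
  simp only [Fintype.card_fin] at hcard
  omega

theorem list_ramsey_matching_lower (r k : ℕ) (hr : 0 < r) (hk : 0 < k) (hrk : 1 < r * k) :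
    max (2 * (r : ℝ)) (((r : ℝ) - 1) * k / (2 * Real.log ((r : ℝ) * k))) ≤
      (listRamsey (matchingGraph r) k : ℝ) := by
  have hS := ramseySet_nonempty r k hr hk
  have hmem := Nat.sInf_mem hS
  obtain ⟨L, hL, hforce⟩ := hmem
  have h2r : 2*r ≤ listRamsey (matchingGraph r) k := lemA hk L hL hforce
  apply max_le
  · have h : ((2*r : ℕ):ℝ) ≤ ((listRamsey (matchingGraph r) k : ℕ):ℝ) := by exact_mod_cast h2r
    push_cast at h
    linarith
  · rcases Nat.lt_or_ge r 2 with h | h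
    · have hr1 : r = 1 := by omega
      subst hr1
      rw [show ((1:ℕ):ℝ) - 1 = 0 by norm_num, zero_mul, zero_div]
      positivity
    · exact lemB h hk h2r L hL hforce
end

section
/- Let H be an ℓ-partite ℓ-uniform hypergraph (ℓ ≥ 2) whose parts each have size at most r. Then there is a constant c = c(r,ℓ) > 0 such that for all sufficiently large integers k, R(H, ⌊c·k/log k⌋) ≤ R_ℓ(H, k) ≤ R(H, k). -/
/-- A hypergraph on vertex type `V`, given by its (finite) set of edges,
each edge being a finite set of vertices. -/
structure FinsetHypergraph (V : Type*) where
  edges : Finset (Finset V)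

namespace FinsetHypergraph

variable {V : Type*} [DecidableEq V]

/-- `H` is `l`-uniform: every edge has exactly `l` vertices. -/
def IsUniform (H : FinsetHypergraph V) (l : ℕ) : Prop :=
  ∀ e ∈ H.edges, e.card = l

/-- A colouring `c` of the edges of the complete `l`-uniform hypergraph on `Fin n`
(viewed as a colouring of all finite subsets of `Fin n`) contains a monochromatic
copy of the hypergraph `H`. -/
def HasMonoCopyIn {β : Type*} (H : FinsetHypergraph V) (n : ℕ) (c : Finset (Fin n) → β) : Prop :=
  ∃ (f : V → Fin n) (x : β), Function.Injective f ∧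
    ∀ e ∈ H.edges, c (e.image f) = x

/-- The `k`-colour list Ramsey number of an `l`-uniform hypergraph `H`: the least `n`
for which one can assign a list of `k` colours to each `l`-subset of `Fin n` so that
every colouring of the `l`-subsets from these lists contains a monochromatic copy of `H`. -/
noncomputable def listRamsey (H : FinsetHypergraph V) (l k : ℕ) : ℕ :=
  sInf { n : ℕ | ∃ L : Finset (Fin n) → Finset ℕ,
    (∀ e : Finset (Fin n), e.card = l → (L e).card = k) ∧
    ∀ c : Finset (Fin n) → ℕ, (∀ e : Finset (Fin n), e.card = l → c e ∈ L e) →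
      H.HasMonoCopyIn n c }

/-- The ordinary `k`-colour Ramsey number of a hypergraph `H`: the least `n` such that
every `k`-colouring of the edges of the complete hypergraph on `Fin n` contains a
monochromatic copy of `H`. -/
noncomputable def ramsey (H : FinsetHypergraph V) (k : ℕ) : ℕ :=
  sInf { n : ℕ | ∀ c : Finset (Fin n) → Fin k, H.HasMonoCopyIn n c }

end FinsetHypergraph

/-- The complete `l`-uniform hypergraph on `r` vertices. -/
def completeHG (r l : ℕ) : FinsetHypergraph (Fin r) :=
  ⟨Finset.powersetCard l Finset.univ⟩

/-- A finite set `G` of `l`-subsets of `Fin n` (an `l`-graph on `n` vertices)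
contains a copy of the hypergraph `H`. -/
def IsCopyIn {V : Type*} [DecidableEq V] (H : FinsetHypergraph V) {n : ℕ}
    (G : Finset (Finset (Fin n))) : Prop :=
  ∃ f : V → Fin n, Function.Injective f ∧ ∀ e ∈ H.edges, e.image f ∈ G

/-!
The upper bound holds because giving every edge the same list `{0, …, k-1}` is an ordinary
`k`-colouring.

For the lower bound, the Ramsey number of `H` is polynomial. Colour the transversals
`p : Fin l → Fin n` of `l` disjoint copies of `Fin n` by the colour of their image; a colour class
has density `β = 1/m`, and Erdős' box argument finds in it a product `A₁ × ⋯ × A_l` of `r`-sets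
once `n ≥ 4r (4/β)^((r+2)^l)`: the `y ∈ [n]^(l-1)` whose fibre has at least `βn/2` points form a
`β/2` fraction, averaging over `r`-subsets `R` gives one lying in the fibres of a
`(β/4)^(r+1)` fraction of the `y`, and one recurses on those `y`. The box contains a copy of `H`,
so `R(H, m) ≤ A m^D` with `D = (r+2)^l`, and hence `N = R_l(H, k) ≤ A k^D`.

Now fix lists on `K_N^(l)` and an `m`-colouring `χ`. A map `π` from colours to `[m]` misses
`χ e` on the whole list of `e` for only a `(1 - 1/m)^k ≤ exp(-k/m)` fraction of all maps, so if
`C(N, l) < exp(k/m)`, which holds for `m = ⌊k / ((Dl+1) log k)⌋`, some `π` hits `χ e` in every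
list. Choosing `c e` in the list of `e` with `π (c e) = χ e`, a monochromatic copy of `H` for the
list colouring `c` is monochromatic for `χ`.
-/

open Finset

namespace Finset

variable {ι α : Type*}

lemma sum_le_card_filter_le_mul_add (s : Finset ι) (f : ι → ℕ) {n : ℕ} (hf : ∀ i ∈ s, f i ≤ n)
    (B : ℕ) : ∑ i ∈ s, f i ≤ #{i ∈ s | B ≤ f i} * n + #s * B := by
  rw [← sum_filter_add_sum_filter_not s (fun i => B ≤ f i)]
  gcongr ?_ + ?_
  · simpa using sum_le_card_nsmul _ _ _ fun i hi => hf i (mem_filter.1 hi).1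
  · refine (sum_le_card_nsmul _ _ B fun i hi => (not_le.1 (mem_filter.1 hi).2).le).trans ?_
    rw [smul_eq_mul]
    gcongr
    exact filter_subset _ _

lemma exists_card_filter_subset_mul_choose_ge [Fintype α] [DecidableEq α] (s : Finset ι)
    (D : ι → Finset α) {r B : ℕ} (hr : r ≤ Fintype.card α) (hB : ∀ y ∈ s, B ≤ #(D y)) :
    ∃ R : Finset α, #R = r ∧
      #s * B.choose r ≤ #{y ∈ s | R ⊆ D y} * (Fintype.card α).choose r := by
  set P := powersetCard r (univ : Finset α)
  have hP : P.Nonempty := powersetCard_nonempty.2 (by simpa using hr)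
  have hcount : ∑ R ∈ P, #{y ∈ s | R ⊆ D y} = ∑ y ∈ s, (#(D y)).choose r := by
    have := sum_card_bipartiteAbove_eq_sum_card_bipartiteBelow (s := P) (t := s)
      (r := fun R y => R ⊆ D y)
    simp only [bipartiteAbove, bipartiteBelow] at this
    rw [this]
    refine sum_congr rfl fun y _ => ?_
    rw [← card_powersetCard]
    congr 1
    ext R
    simp [P, mem_powersetCard, and_comm]
  have hsum : ∑ _R ∈ P, #s * B.choose r ≤
      ∑ R ∈ P, #{y ∈ s | R ⊆ D y} * (Fintype.card α).choose r :=
    calc ∑ _R ∈ P, #s * B.choose r = (Fintype.card α).choose r * (#s * B.choose r) := by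
          simp [P]
      _ ≤ (Fintype.card α).choose r * ∑ y ∈ s, (#(D y)).choose r := by
          gcongr
          simpa using card_nsmul_le_sum s _ _ fun y hy => Nat.choose_le_choose r (hB y hy)
      _ = ∑ R ∈ P, #{y ∈ s | R ⊆ D y} * (Fintype.card α).choose r := by
          rw [← sum_mul, hcount, mul_comm]
  obtain ⟨R, hR, hle⟩ := exists_le_of_sum_le hP hsum
  exact ⟨R, (mem_powersetCard.1 hR).2, hle⟩

end Finset

lemma Fin.sum_card_filter_cons_mem {l : ℕ} {β : Type*} [Fintype β] [DecidableEq β]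
    (S : Finset (Fin (l + 1) → β)) : ∑ y : Fin l → β, #{x | Fin.cons x y ∈ S} = #S := by
  rw [card_eq_sum_card_fiberwise (f := Fin.tail) (t := univ) fun _ _ => mem_univ _]
  refine sum_congr rfl fun y _ => ?_
  rw [← card_image_of_injective {x | Fin.cons x y ∈ S}
    (Fin.cons_left_injective (α := fun _ => β) y)]
  congr 1
  ext p
  simp only [mem_image, mem_filter, mem_univ, true_and]
  constructor
  · rintro ⟨x, hx, rfl⟩
    exact ⟨hx, Fin.tail_cons (α := fun _ => β) x y⟩
  · rintro ⟨hp, rfl⟩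
    exact ⟨p 0, by rwa [Fin.cons_self_tail], Fin.cons_self_tail p⟩

open Nat in
lemma Nat.pow_mul_choose_le_choose {t : ℝ} {n B r : ℕ} (ht : 0 ≤ t)
    (h : t * n ≤ ((B + 1 - r : ℕ) : ℝ)) : t ^ r * n.choose r ≤ B.choose r := by
  refine le_of_mul_le_mul_left ?_ (by positivity : (0 : ℝ) < r !)
  calc (r ! : ℝ) * (t ^ r * n.choose r) = t ^ r * n.descFactorial r := by
        rw [descFactorial_eq_factorial_mul_choose]; push_cast; ring
    _ ≤ t ^ r * (n : ℝ) ^ r := by gcongr; exact_mod_cast descFactorial_le_pow n r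
    _ = (t * n) ^ r := (mul_pow ..).symm
    _ ≤ ((B + 1 - r : ℕ) : ℝ) ^ r := by gcongr
    _ ≤ B.descFactorial r := by exact_mod_cast pow_sub_le_descFactorial B r
    _ = r ! * B.choose r := by rw [descFactorial_eq_factorial_mul_choose]; push_cast; ring

theorem exists_cons_mem_of_density {r l n : ℕ} {β : ℝ} (hr : 0 < r) (hβ0 : 0 < β) (hβ1 : β ≤ 1)
    (hn : 4 * r ≤ β * n) {S : Finset (Fin (l + 1) → Fin n)} (hS : β * n ^ (l + 1) ≤ #S) :
    ∃ R : Finset (Fin n), #R = r ∧ ∃ S' : Finset (Fin l → Fin n),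
      (β / 4) ^ (r + 1) * n ^ l ≤ #S' ∧ ∀ x ∈ R, ∀ y ∈ S', Fin.cons x y ∈ S := by
  have hr' : (1 : ℝ) ≤ r := by exact_mod_cast hr
  have hn0 : (0 : ℝ) < n := by nlinarith
  have hrn : r ≤ n := by exact_mod_cast (show (r : ℝ) ≤ n by nlinarith)
  set D : (Fin l → Fin n) → Finset (Fin n) := fun y => {x | Fin.cons x y ∈ S}
  set B := ⌊β * n / 2⌋₊
  have hB : (B : ℝ) ≤ β * n / 2 := Nat.floor_le (by positivity)
  have hB' : β * n / 2 - 1 < B := Nat.sub_one_lt_floor _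
  have hrB : r ≤ B + 1 := by exact_mod_cast (show (r : ℝ) ≤ B + 1 by linarith)
  have hBr : β / 4 * n ≤ ((B + 1 - r : ℕ) : ℝ) := by
    rw [Nat.cast_sub hrB]; push_cast; linarith
  set rich := ({y | B ≤ #(D y)} : Finset (Fin l → Fin n))
  have hrich : β / 2 * n ^ l ≤ #rich := by
    have hsplit := sum_le_card_filter_le_mul_add univ (fun y => #(D y)) (n := n)
      (fun y _ => (card_le_univ _).trans_eq (Fintype.card_fin n)) B
    rw [show ∑ y, #(D y) = #S from Fin.sum_card_filter_cons_mem S] at hsplit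
    simp only [card_univ, Fintype.card_fun, Fintype.card_fin] at hsplit
    have hsplit' : (#S : ℝ) ≤ #rich * n + n ^ l * B := by exact_mod_cast hsplit
    have : β / 2 * n ^ l * n ≤ #rich * n := by
      nlinarith [pow_succ (n : ℝ) l, pow_nonneg hn0.le l]
    exact le_of_mul_le_mul_right this hn0
  obtain ⟨R, hR, hcount⟩ := exists_card_filter_subset_mul_choose_ge rich D (r := r)
    (by simpa using hrn) fun y hy => (mem_filter.1 hy).2
  refine ⟨R, hR, {y ∈ rich | R ⊆ D y}, ?_, fun x hx y hy => ?_⟩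
  · have hchoose := Nat.pow_mul_choose_le_choose (by positivity) hBr
    have hpos : (0 : ℝ) < n.choose r := by exact_mod_cast Nat.choose_pos hrn
    rw [Fintype.card_fin] at hcount
    have hcount' : (#rich : ℝ) * B.choose r ≤ #{y ∈ rich | R ⊆ D y} * n.choose r := by
      exact_mod_cast hcount
    refine le_of_mul_le_mul_right ?_ hpos
    calc (β / 4) ^ (r + 1) * n ^ l * n.choose r
        ≤ β / 2 * n ^ l * ((β / 4) ^ r * n.choose r) := by
          rw [pow_succ]
          have : 0 ≤ (β / 4) ^ r * n ^ l * n.choose r := by positivity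
          nlinarith
      _ ≤ #rich * B.choose r := by gcongr
      _ ≤ _ := hcount'
  · simpa [D] using (mem_filter.1 hy).2 hx

theorem exists_piFinset_subset_of_density {r : ℕ} (hr : 0 < r) {l n : ℕ} {β : ℝ}
    {S : Finset (Fin l → Fin n)} (hβ0 : 0 < β) (hβ1 : β ≤ 1)
    (hn : 4 * r ≤ (β / 4) ^ (r + 2) ^ l * n) (hS : β * n ^ l ≤ #S) :
    ∃ A : Fin l → Finset (Fin n), (∀ i, #(A i) = r) ∧ Fintype.piFinset A ⊆ S := by
  induction l generalizing β with
  | zero =>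
    have hS0 : (0 : ℝ) < #S := lt_of_lt_of_le (by simpa using hβ0) hS
    obtain ⟨p, hp⟩ : S.Nonempty := card_pos.1 (by exact_mod_cast hS0)
    exact ⟨finZeroElim, finZeroElim, fun q _ => Subsingleton.elim p q ▸ hp⟩
  | succ l ih =>
    have hq0 : 0 ≤ β / 4 := by positivity
    have hq1 : β / 4 ≤ 1 := by linarith
    have hβn : 4 * r ≤ β * n := hn.trans <| by
      gcongr
      calc (β / 4) ^ (r + 2) ^ (l + 1) ≤ β / 4 := pow_le_of_le_one hq0 hq1 (by positivity)
        _ ≤ β := by linarith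
    obtain ⟨R, hR, S', hS', hRS'⟩ := exists_cons_mem_of_density hr hβ0 hβ1 hβn hS
    -- The exponent `(r + 2) ^ l` comes from `(β / 4) ^ (r + 2) ≤ (β / 4) ^ (r + 1) / 4`.
    have hn' : 4 * r ≤ ((β / 4) ^ (r + 1) / 4) ^ (r + 2) ^ l * n :=
      calc 4 * r ≤ (β / 4) ^ (r + 2) ^ (l + 1) * n := hn
        _ = ((β / 4) ^ (r + 2)) ^ (r + 2) ^ l * n := by rw [← pow_mul, pow_succ']
        _ ≤ ((β / 4) ^ (r + 1) / 4) ^ (r + 2) ^ l * n := by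
          gcongr
          rw [pow_succ]
          nlinarith [pow_nonneg hq0 (r + 1)]
    obtain ⟨A, hA, hAS'⟩ := ih (by positivity) (pow_le_one₀ hq0 hq1) hn' hS'
    refine ⟨Fin.cons R A, Fin.cases hR hA, fun p hp => ?_⟩
    rw [← Fin.cons_self_tail p] at hp ⊢
    rw [Fin.cons_mem_piFinset_cons] at hp
    exact hRS' _ hp.1 _ (hAS' hp.2)

lemma exists_injective_fst_eq {V ι α : Type*} [Fintype V] [DecidableEq ι] (g : V → ι)
    (A : ι → Finset α) (hA : ∀ i, #{v | g v = i} ≤ #(A i)) :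
    ∃ f : V → ι × α, Function.Injective f ∧ ∀ v, (f v).1 = g v ∧ (f v).2 ∈ A (g v) := by
  let ψ (i : ι) : {v // g v = i} ↪ A i :=
    (Function.Embedding.nonempty_of_card_le (by simpa [Fintype.card_subtype] using hA i)).some
  let F : (Σ i, {v // g v = i}) → ι × α := fun a => (a.1, ψ a.1 a.2)
  have hF : Function.Injective F := by
    rintro ⟨i, a⟩ ⟨j, b⟩ h
    simp only [F, Prod.mk.injEq] at h
    obtain ⟨rfl, h⟩ := h
    rw [(ψ i).injective (Subtype.ext h)]
  exact ⟨F ∘ (Equiv.sigmaFiberEquiv g).symm, hF.comp (Equiv.injective _),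
    fun v => ⟨rfl, (ψ (g v) ⟨v, rfl⟩).2⟩⟩

lemma exists_mem_piFinset_image_eq {V ι α : Type*} [Fintype ι] [DecidableEq ι] [DecidableEq α]
    {g : V → ι} {A : ι → Finset α} {f : V → ι × α}
    (hf : ∀ v, (f v).1 = g v ∧ (f v).2 ∈ A (g v)) {e : Finset V} (hinj : Set.InjOn g e)
    (hsurj : ∀ i, ∃ v ∈ e, g v = i) :
    ∃ p ∈ Fintype.piFinset A, e.image f = univ.image fun i => (i, p i) := by
  choose w hwe hgw using hsurj
  have hfw : ∀ i, f (w i) = (i, (f (w i)).2) := fun i => Prod.ext ((hf _).1.trans (hgw i)) rfl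
  refine ⟨fun i => (f (w i)).2,
    Fintype.mem_piFinset.2 fun i => by simpa [hgw i] using (hf (w i)).2, ?_⟩
  ext z
  simp only [mem_image, mem_univ, true_and]
  constructor
  · rintro ⟨v, hv, rfl⟩
    have hwv : w (g v) = v := hinj (hwe _) hv (hgw _)
    exact ⟨g v, by rw [← hfw, hwv]⟩
  · rintro ⟨i, rfl⟩
    exact ⟨w i, hwe i, hfw i⟩

namespace FinsetHypergraph

variable {V : Type*} (H : FinsetHypergraph V)

/-- The arrow relation `n → (H)_k`, so that `H.ramsey k = sInf {n | H.Arrows k n}`; `ListArrows`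
is its list analogue, with `H.listRamsey l k = sInf {n | H.ListArrows l k n}`. -/
def Arrows (k n : ℕ) : Prop :=
  ∀ c : Finset (Fin n) → Fin k, H.HasMonoCopyIn n c

def ListArrows (l k n : ℕ) : Prop :=
  ∃ L : Finset (Fin n) → Finset ℕ, (∀ e : Finset (Fin n), e.card = l → (L e).card = k) ∧
    ∀ c : Finset (Fin n) → ℕ, (∀ e : Finset (Fin n), e.card = l → c e ∈ L e) →
      H.HasMonoCopyIn n c

variable {H}

theorem Arrows.ramsey_le {k n : ℕ} (h : H.Arrows k n) : H.ramsey k ≤ n :=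
  Nat.sInf_le h

theorem Arrows.arrows_ramsey {k n : ℕ} (h : H.Arrows k n) : H.Arrows k (H.ramsey k) :=
  Nat.sInf_mem (s := {n | H.Arrows k n}) ⟨n, h⟩

theorem ListArrows.listRamsey_le {l k n : ℕ} (h : H.ListArrows l k n) : H.listRamsey l k ≤ n :=
  Nat.sInf_le h

theorem ListArrows.listArrows_listRamsey {l k n : ℕ} (h : H.ListArrows l k n) :
    H.ListArrows l k (H.listRamsey l k) :=
  Nat.sInf_mem (s := {n | H.ListArrows l k n}) ⟨n, h⟩

theorem arrows_of_isPartite [Fintype V] {l r : ℕ} (hr : 0 < r) (hunif : H.IsUniform l)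
    (g : V → Fin l) (hpartite : ∀ e ∈ H.edges, ∀ a ∈ e, ∀ b ∈ e, g a = g b → a = b)
    (hsize : ∀ i : Fin l, #{v | g v = i} ≤ r) {m : ℕ} (hm : 0 < m) :
    H.Arrows m (l * (4 * r * (4 * m) ^ (r + 2) ^ l)) := by
  have : NeZero m := ⟨hm.ne'⟩
  generalize hn : 4 * r * (4 * m) ^ (r + 2) ^ l = n
  intro χ
  let colour (p : Fin l → Fin n) : Fin m :=
    χ ((univ.image fun i => (i, p i)).image finProdFinEquiv)
  obtain ⟨x, -, hx⟩ := exists_le_card_fiber_of_nsmul_le_card_of_maps_to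
    (s := univ) (t := univ) (f := colour) (b := (n : ℝ) ^ l / m) (fun _ _ => mem_univ _)
    univ_nonempty (by simp [mul_div_cancel₀, hm.ne'])
  have hdensity : 4 * r ≤ ((1 : ℝ) / m / 4) ^ (r + 2) ^ l * n := by
    rw [← hn]
    push_cast
    field_simp
    rw [div_pow, one_pow, one_div_mul_cancel (by positivity)]
  obtain ⟨A, hA, hAS⟩ := exists_piFinset_subset_of_density hr (β := 1 / m) (by positivity)
    (by simpa using inv_le_one_of_one_le₀ (Nat.one_le_cast.2 hm)) hdensity
    (by rw [one_div_mul_eq_div]; exact hx)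
  obtain ⟨f, hf, hfA⟩ := exists_injective_fst_eq g A fun i => (hsize i).trans (hA i).ge
  refine ⟨finProdFinEquiv ∘ f, x, finProdFinEquiv.injective.comp hf, fun e he => ?_⟩
  have hinj : Set.InjOn g e := fun a ha b hb => hpartite e he a ha b hb
  have himage : e.image g = univ := eq_univ_of_card _ <| by
    rw [card_image_of_injOn hinj, hunif e he, Fintype.card_fin]
  obtain ⟨p, hp, hpe⟩ := exists_mem_piFinset_image_eq hfA hinj fun i => by
    simpa using himage.ge (mem_univ i)
  rw [← image_image, hpe]
  exact (mem_filter.1 (hAS hp)).2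

end FinsetHypergraph

lemma card_piFinset_ite_erase_mul_pow {α : Type*} [Fintype α] [DecidableEq α] (s : Finset α)
    {m : ℕ} (x : Fin m) :
    #(Fintype.piFinset fun a => if a ∈ s then univ.erase x else univ) * m ^ #s =
      (m - 1) ^ #s * m ^ Fintype.card α := by
  rw [Fintype.card_piFinset]
  have hcard : ∀ a, #(if a ∈ s then univ.erase x else univ) = if a ∈ s then m - 1 else m :=
    fun a => by split_ifs <;> simp
  have hcompl : #{a | a ∉ s} = Fintype.card α - #s := by
    rw [← card_compl]; congr 1; ext; simp
  simp only [hcard, prod_ite, prod_const, filter_mem_eq_inter, univ_inter, hcompl]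
  rw [mul_assoc, ← pow_add, Nat.sub_add_cancel (card_le_univ s)]

theorem Fintype.exists_forall_exists_mem_eq_of_card_mul_lt {ι α : Type*} [Fintype α]
    [DecidableEq α] {m k : ℕ} (hm : 0 < m) (E : Finset ι) (L : ι → Finset α)
    (hL : ∀ e ∈ E, #(L e) = k) (χ : ι → Fin m)
    (hcount : #E * (m - 1) ^ k < m ^ k) : ∃ π : α → Fin m, ∀ e ∈ E, ∃ a ∈ L e, π a = χ e := by
  let bad (e : ι) : Finset (α → Fin m) :=
    Fintype.piFinset fun a => if a ∈ L e then univ.erase (χ e) else univ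
  have hbad : #(E.biUnion bad) < Fintype.card (α → Fin m) := by
    refine Nat.lt_of_mul_lt_mul_right (a := m ^ k) ?_
    calc #(E.biUnion bad) * m ^ k ≤ ∑ e ∈ E, #(bad e) * m ^ k := by
          rw [← sum_mul]; gcongr; exact card_biUnion_le
      _ = #E * (m - 1) ^ k * m ^ Fintype.card α := by
          rw [Finset.sum_congr rfl fun e he =>
            hL e he ▸ card_piFinset_ite_erase_mul_pow (L e) (χ e), sum_const, smul_eq_mul,
            mul_assoc]
      _ < m ^ k * m ^ Fintype.card α := by gcongr
      _ = Fintype.card (α → Fin m) * m ^ k := by simp [mul_comm]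
  obtain ⟨π, -, hπ⟩ := exists_mem_notMem_of_card_lt_card hbad
  refine ⟨π, fun e he => ?_⟩
  have : π ∉ bad e := fun h => hπ (mem_biUnion.2 ⟨e, he, h⟩)
  simp only [bad, Fintype.mem_piFinset, not_forall] at this
  obtain ⟨a, ha⟩ := this
  split_ifs at ha with haL
  · exact ⟨a, haL, by simpa using ha⟩
  · exact absurd (mem_univ _) ha

theorem exists_forall_exists_mem_eq_of_card_mul_lt {ι α : Type*} [DecidableEq α] {m k : ℕ}
    (hm : 0 < m) (E : Finset ι) (L : ι → Finset α) (hL : ∀ e ∈ E, #(L e) = k) (χ : ι → Fin m)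
    (hcount : #E * (m - 1) ^ k < m ^ k) : ∃ π : α → Fin m, ∀ e ∈ E, ∃ a ∈ L e, π a = χ e := by
  set T := E.biUnion L
  have hLT : ∀ e ∈ E, #((L e).subtype (· ∈ T)) = k := fun e he => by
    rw [card_subtype, filter_true_of_mem fun a ha => subset_biUnion_of_mem L he ha, hL e he]
  obtain ⟨π, hπ⟩ := Fintype.exists_forall_exists_mem_eq_of_card_mul_lt hm E _ hLT χ hcount
  refine ⟨fun a => if ha : a ∈ T then π ⟨a, ha⟩ else ⟨0, hm⟩, fun e he => ?_⟩
  obtain ⟨⟨a, haT⟩, ha, hπa⟩ := hπ e he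
  exact ⟨a, mem_subtype.1 ha, by simpa [haT] using hπa⟩

namespace FinsetHypergraph

variable {V : Type*} {H : FinsetHypergraph V} {l k n : ℕ}

theorem Arrows.listArrows (hunif : H.IsUniform l) (hk : 0 < k) (h : H.Arrows k n) :
    H.ListArrows l k n := by
  refine ⟨fun _ => range k, fun _ _ => card_range k, fun c hc => ?_⟩
  obtain ⟨f, y, hf, hmono⟩ := h fun e => if he : c e < k then ⟨c e, he⟩ else ⟨0, hk⟩
  refine ⟨f, y, hf, fun e he => ?_⟩
  have hlt : c (e.image f) < k :=
    mem_range.1 (hc _ ((card_image_of_injective _ hf).trans (hunif e he)))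
  simpa [hlt] using congrArg Fin.val (hmono e he)

theorem Arrows.listRamsey_le_ramsey (hunif : H.IsUniform l) (hk : 0 < k) (h : H.Arrows k n) :
    H.listRamsey l k ≤ H.ramsey k :=
  (h.arrows_ramsey.listArrows hunif hk).listRamsey_le

theorem ListArrows.arrows (hunif : H.IsUniform l) {m : ℕ} (hm : 0 < m) (h : H.ListArrows l k n)
    (hcount : n.choose l * (m - 1) ^ k < m ^ k) : H.Arrows m n := by
  obtain ⟨L, hL, hmono⟩ := h
  intro χ
  obtain ⟨π, hπ⟩ := exists_forall_exists_mem_eq_of_card_mul_lt hm (powersetCard l univ) L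
    (fun e he => hL e (mem_powersetCard.1 he).2) χ (by simpa using hcount)
  have hlift : ∀ e : Finset (Fin n), ∃ a, #e = l → a ∈ L e ∧ π a = χ e := fun e => by
    by_cases he : #e = l
    · obtain ⟨a, ha, hπa⟩ := hπ e (mem_powersetCard.2 ⟨subset_univ e, he⟩)
      exact ⟨a, fun _ => ⟨ha, hπa⟩⟩
    · exact ⟨0, fun h => absurd h he⟩
  choose c hc using hlift
  obtain ⟨f, x, hf, hx⟩ := hmono c fun e he => (hc e he).1
  refine ⟨f, π x, hf, fun e he => ?_⟩
  rw [← hx e he, (hc _ ((card_image_of_injective _ hf).trans (hunif e he))).2]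

end FinsetHypergraph

lemma mul_log_le_self_of_four_mul_sq_le {q x : ℝ} (hq : 0 ≤ q) (hx : 4 * q ^ 2 ≤ x) :
    q * Real.log x ≤ x := by
  have hx0 : 0 ≤ x := le_trans (by positivity) hx
  have hsqrt : 2 * q ≤ √x := Real.le_sqrt_of_sq_le (by linarith)
  have hlog : Real.log x ≤ 2 * √x := by
    have := Real.log_le_self (Real.sqrt_nonneg x)
    rw [Real.log_sqrt hx0] at this
    linarith
  calc q * Real.log x ≤ q * (2 * √x) := by gcongr
    _ = 2 * q * √x := by ring
    _ ≤ √x * √x := by gcongr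
    _ = x := Real.mul_self_sqrt hx0

lemma floor_div_mul_log_spec {q : ℝ} {k : ℕ} (hq : 1 ≤ q) (hk : 4 * q ^ 2 ≤ k) :
    0 < ⌊q⁻¹ * k / Real.log k⌋₊ ∧ ⌊q⁻¹ * k / Real.log k⌋₊ * (q * Real.log k) ≤ k := by
  have hlog : 0 < Real.log k := Real.log_pos (by nlinarith)
  have hql : 0 < q * Real.log k := by positivity
  rw [show q⁻¹ * k / Real.log k = k / (q * Real.log k) by field_simp]
  refine ⟨Nat.floor_pos.2 ((one_le_div hql).2 ?_),
    (le_div_iff₀ hql).1 (Nat.floor_le (by positivity))⟩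
  exact mul_log_le_self_of_four_mul_sq_le (by linarith) hk

lemma mul_pred_pow_lt_pow {M m k : ℕ} (hm : 0 < m) (h : (M : ℝ) < Real.exp (k / m)) :
    M * (m - 1) ^ k < m ^ k := by
  have hmR : (0 : ℝ) < m := by exact_mod_cast hm
  have hpred : ((m - 1 : ℕ) : ℝ) ^ k ≤ m ^ k * Real.exp (-(k / m)) := by
    rw [Nat.cast_pred hm, show (m : ℝ) - 1 = m * (1 - 1 / m) by field_simp, mul_pow,
      show -(k / m : ℝ) = k * -(1 / m) by ring, Real.exp_nat_mul]
    gcongr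
    · rw [sub_nonneg, div_le_one hmR]
      exact_mod_cast hm
    · exact Real.one_sub_le_exp_neg _
  have hlt : (M : ℝ) * ((m - 1 : ℕ) : ℝ) ^ k < m ^ k :=
    calc (M : ℝ) * ((m - 1 : ℕ) : ℝ) ^ k ≤ M * (m ^ k * Real.exp (-(k / m))) := by gcongr
      _ < Real.exp (k / m) * (m ^ k * Real.exp (-(k / m))) := by gcongr
      _ = m ^ k := by rw [mul_left_comm, ← Real.exp_add, add_neg_cancel, Real.exp_zero, mul_one]
  exact_mod_cast hlt

lemma choose_lt_exp_div {N A D l k m : ℕ} (hN : N ≤ A * k ^ D) (hA : A ^ l < k) (hm : 0 < m)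
    (hmk : m * ((D * l + 1 : ℕ) * Real.log k) ≤ k) : (N.choose l : ℝ) < Real.exp (k / m) := by
  have hk : (0 : ℝ) < k := by exact_mod_cast (Nat.zero_le _).trans_lt hA
  have hmR : (0 : ℝ) < m := by exact_mod_cast hm
  calc (N.choose l : ℝ) ≤ (N : ℝ) ^ l := by exact_mod_cast Nat.choose_le_pow N l
    _ ≤ ((A * k ^ D : ℕ) : ℝ) ^ l := by gcongr
    _ = ((A ^ l : ℕ) : ℝ) * (k : ℝ) ^ (D * l) := by push_cast; rw [mul_pow, ← pow_mul]
    _ < k * (k : ℝ) ^ (D * l) := by gcongr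
    _ = Real.exp ((D * l + 1 : ℕ) * Real.log k) := by
      rw [Real.exp_nat_mul, Real.exp_log hk, pow_succ']
    _ ≤ Real.exp (k / m) := Real.exp_le_exp.2 ((le_div_iff₀' hmR).2 hmk)

theorem list_ramsey_partite_general {V : Type*} [Fintype V]
    (H : FinsetHypergraph V) (l r : ℕ) (hr : 0 < r) (hunif : H.IsUniform l)
    (g : V → Fin l)
    (hpartite : ∀ e ∈ H.edges, ∀ a ∈ e, ∀ b ∈ e, g a = g b → a = b)
    (hsize : ∀ i : Fin l, (Finset.univ.filter (fun v => g v = i)).card ≤ r) :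
    ∃ c : ℝ, 0 < c ∧ ∃ k₀ : ℕ, ∀ k : ℕ, k₀ ≤ k →
      H.ramsey ⌊c * (k : ℝ) / Real.log k⌋₊ ≤ H.listRamsey l k ∧
      H.listRamsey l k ≤ H.ramsey k := by
  set D := (r + 2) ^ l
  set A := l * (4 * r * 4 ^ D)
  set q := D * l + 1
  have hpoly : ∀ m, 0 < m → H.Arrows m (A * m ^ D) := fun m hm => by
    simpa [A, mul_pow, mul_assoc, mul_left_comm] using
      H.arrows_of_isPartite hr hunif g hpartite hsize hm
  refine ⟨(q : ℝ)⁻¹, by positivity, A ^ l + 4 * q ^ 2, fun k hk => ?_⟩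
  have hq : 1 ≤ q := Nat.le_add_left 1 _
  have hkA : A ^ l < k := by
    have := Nat.one_le_pow 2 q hq
    omega
  have hkq : 4 * (q : ℝ) ^ 2 ≤ k := by exact_mod_cast le_of_add_le_right hk
  have hk0 : 0 < k := (Nat.zero_le _).trans_lt hkA
  have hArrows := hpoly k hk0
  have hupper := hArrows.listRamsey_le_ramsey hunif hk0
  obtain ⟨hm, hmk⟩ := floor_div_mul_log_spec (by exact_mod_cast hq) hkq
  have hcount := mul_pred_pow_lt_pow hm <|
    choose_lt_exp_div (hupper.trans hArrows.ramsey_le) hkA hm hmk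
  have hlist := (hArrows.listArrows hunif hk0).listArrows_listRamsey
  exact ⟨(hlist.arrows hunif hm hcount).ramsey_le, hupper⟩

theorem list_ramsey_partite {V : Type*} [DecidableEq V] [Fintype V]
    (H : FinsetHypergraph V) (l r : ℕ) (hl : 2 ≤ l) (hr : 0 < r) (hunif : H.IsUniform l)
    (g : V → Fin l)
    (hpartite : ∀ e ∈ H.edges, ∀ a ∈ e, ∀ b ∈ e, g a = g b → a = b)
    (hsize : ∀ i : Fin l, (Finset.univ.filter (fun v => g v = i)).card ≤ r) :
    ∃ c : ℝ, 0 < c ∧ ∃ k₀ : ℕ, ∀ k : ℕ, k₀ ≤ k →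
      H.ramsey ⌊c * (k : ℝ) / Real.log k⌋₊ ≤ H.listRamsey l k ∧
      H.listRamsey l k ≤ H.ramsey k :=
  list_ramsey_partite_general H l r hr hunif g hpartite hsize
end
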